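/- arXiv:math/9909193 — 3 statements merged into one kernel-verified Lean document; each statement's English description precedes it below -/
import Mathlib

section
/- Suppose γ: ℝⁿ × ℝᵏ → ℝⁿ is smooth near (x₀,0) with γ(x,0) ≡ x, and admits the exponential representation γ(x,t) = exp(∑_{0<|α|≤N} t^α X_α/α!)(x) + O(|t|^{N+1}) for smooth vector fields X_α, for each N. Then the vector fields X_α are uniquely determined: if two collections {X_α}, {Y_α} both satisfy these identities for all N, then X_α = Y_α for every α near x₀. -/
/-!
Induction on `|α|`. Suppose `X_β = Y_β` near `x` for `|β| < m`, and let `V_t`, `W_t` be the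
fields `∑_{0<|β|≤m} t^β X_β/β!` and `∑_{0<|β|≤m} t^β Y_β/β!`. On a small ball around `x` both
are `O(|t|)` with Lipschitz constant `O(|t|)`, while `V_t - W_t = P_t`, the part of degree `m`,
is `O(|t|^m)` with Lipschitz constant `O(|t|^m)`. Grönwall's inequality then gives
`exp(V_t)(x) - exp(W_t)(x) = P_t(x) + O(|t|^{m+1})`; both exponentials are
`γ(x,t) + O(|t|^{m+1})`, so `P_t(x) = O(|t|^{m+1})`. Being homogeneous of degree `m` in `t`,
`P_t(x)` vanishes identically, and the monomials `t^β` are linearly independent, so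
`X_β(x) = Y_β(x)` for `|β| = m`.
-/

open Finset

/-- Degree of a multi-index. -/
def mdeg {k : ℕ} (α : Fin k → ℕ) : ℕ := ∑ i, α i

/-- `t^α`. -/
def tpow {k : ℕ} (t : Fin k → ℝ) (α : Fin k → ℕ) : ℝ := ∏ i, t i ^ α i

/-- `α!`. -/
def mfact {k : ℕ} (α : Fin k → ℕ) : ℕ := ∏ i, Nat.factorial (α i)

/-- The multi-indices `α` with `0 < |α| ≤ N`. -/
def mIdxs (k N : ℕ) : Finset (Fin k → ℕ) :=
  (Fintype.piFinset fun _ : Fin k => Finset.range (N + 1)).filter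
    fun α => 0 < ∑ i, α i ∧ ∑ i, α i ≤ N

/-- The vector field `∑_{0 < |α| ≤ N} (t^α / α!) X_α`. -/
noncomputable def vSum {n k : ℕ} (N : ℕ)
    (X : (Fin k → ℕ) → (Fin n → ℝ) → (Fin n → ℝ))
    (t : Fin k → ℝ) (x : Fin n → ℝ) : Fin n → ℝ :=
  ∑ α ∈ mIdxs k N, (tpow t α / (mfact α : ℝ)) • X α x

open Filter Topology Asymptotics Metric
open scoped NNReal

section Trajectories

variable {E : Type*} [NormedAddCommGroup E] [NormedSpace ℝ E]

theorem gronwallBound_zero_le {K ε x : ℝ} (hK : 0 ≤ K) (hε : 0 ≤ ε) :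
    gronwallBound 0 K ε x ≤ ε * x * Real.exp (K * x) := by
  rcases hK.eq_or_lt with rfl | hK
  · simp [gronwallBound_K0]
  · have hexp : Real.exp (K * x) - 1 ≤ K * x * Real.exp (K * x) := by
      have h := Real.add_one_le_exp (-(K * x))
      rw [Real.exp_neg] at h
      have := Real.exp_pos (K * x)
      field_simp at h
      nlinarith
    simp only [gronwallBound_of_K_ne_0 hK.ne', zero_mul, zero_add]
    calc ε / K * (Real.exp (K * x) - 1) ≤ ε / K * (K * x * Real.exp (K * x)) := by gcongr
      _ = ε * x * Real.exp (K * x) := by field_simp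

theorem norm_trajectory_sub_le {f : E → E} {φ : ℝ → E} {x : E} {r K : ℝ}
    (hφ : ∀ s ∈ Set.Icc (0 : ℝ) 1, HasDerivAt φ (f (φ s)) s) (hφ0 : φ 0 = x)
    (hK : 0 ≤ K) (hKr : K < r) (hf : ∀ y ∈ closedBall x r, ‖f y‖ ≤ K) :
    ∀ s ∈ Set.Icc (0 : ℝ) 1, ‖φ s - x‖ ≤ K * s := by
  -- Barrier `s ↦ K' * s`: where `‖φ s - x‖ = K' * s < r`, the speed is at most `K < K'`.
  have hK' : ∀ K' ∈ Set.Ioo K r, ∀ s ∈ Set.Icc (0 : ℝ) 1, ‖φ s - x‖ ≤ K' * s := by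
    intro K' hK'
    refine image_norm_le_of_norm_deriv_right_lt_deriv_boundary' (f := fun s => φ s - x)
      (B' := fun _ => K') (fun s hs => ((hφ s hs).continuousAt.sub continuousAt_const)
        |>.continuousWithinAt) (fun s hs => ((hφ s (Set.Ico_subset_Icc_self hs)).sub_const x)
        |>.hasDerivWithinAt) (by simp [hφ0]) (by fun_prop) (fun s _ => ?_) fun s hs hsB => ?_
    · simpa using ((hasDerivAt_id s).const_mul K').hasDerivWithinAt
    · refine (hf _ ?_).trans_lt hK'.1
      rw [mem_closedBall, dist_eq_norm, hsB]
      nlinarith [hs.1, hs.2, hK'.1, hK'.2]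
  intro s hs
  have hlim : Tendsto (fun K' => K' * s) (𝓝[>] K) (𝓝 (K * s)) :=
    ((continuous_mul_const s).tendsto K).mono_left nhdsWithin_le_nhds
  exact ge_of_tendsto hlim (eventually_of_mem (Ioo_mem_nhdsGT hKr) fun K' hK'' => hK' K' hK'' s hs)

theorem norm_trajectory_sub_trajectory_sub_le {v w : E → E} {φ ψ : ℝ → E} {B : Set E} {x : E}
    {a δ : ℝ} {L ℓ : ℝ≥0}
    (hφ : ∀ s ∈ Set.Icc (0 : ℝ) 1, HasDerivAt φ (v (φ s)) s)
    (hψ : ∀ s ∈ Set.Icc (0 : ℝ) 1, HasDerivAt ψ (w (ψ s)) s) (hφ0 : φ 0 = x) (hψ0 : ψ 0 = x)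
    (hφB : ∀ s ∈ Set.Icc (0 : ℝ) 1, φ s ∈ B) (hψB : ∀ s ∈ Set.Icc (0 : ℝ) 1, ψ s ∈ B)
    (hφx : ∀ s ∈ Set.Icc (0 : ℝ) 1, ‖φ s - x‖ ≤ a)
    (hw : LipschitzOnWith L w B) (hvw : LipschitzOnWith ℓ (v - w) B)
    (hδ : ∀ y ∈ B, ‖v y - w y‖ ≤ δ) :
    ‖(φ 1 - ψ 1) - (v x - w x)‖ ≤ ℓ * a + L * (δ * Real.exp L) := by
  have hxB : x ∈ B := hφ0 ▸ hφB 0 (Set.left_mem_Icc.2 zero_le_one)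
  have hδ0 : 0 ≤ δ := (norm_nonneg _).trans (hδ x hxB)
  have hIco : Set.Ico (0 : ℝ) 1 ⊆ Set.Icc 0 1 := Set.Ico_subset_Icc_self
  -- Grönwall: `φ` is a `δ`-approximate trajectory of `w`.
  have hgap : ∀ s ∈ Set.Icc (0 : ℝ) 1, ‖φ s - ψ s‖ ≤ δ * Real.exp L := by
    intro s hs
    have hG := dist_le_of_approx_trajectories_ODE_of_mem (v := fun _ => w) (s := fun _ => B)
      (εg := 0) (fun _ _ => hw) (fun s hs => (hφ s hs).continuousAt.continuousWithinAt)
      (fun s hs => (hφ s (hIco hs)).hasDerivWithinAt)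
      (fun s hs => (dist_eq_norm _ _).trans_le (hδ _ (hφB s (hIco hs))))
      (fun s hs => hφB s (hIco hs)) (fun s hs => (hψ s hs).continuousAt.continuousWithinAt)
      (fun s hs => (hψ s (hIco hs)).hasDerivWithinAt) (fun s _ => (dist_self _).le)
      (fun s hs => hψB s (hIco hs)) (by rw [hφ0, hψ0, dist_self]) s hs
    rw [add_zero, sub_zero, dist_eq_norm] at hG
    calc ‖φ s - ψ s‖ ≤ δ * s * Real.exp (L * s) :=
          hG.trans (gronwallBound_zero_le L.coe_nonneg hδ0)
      _ ≤ δ * 1 * Real.exp (L * 1) := by gcongr <;> exact hs.2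
      _ = δ * Real.exp L := by ring_nf
  have hderiv : ∀ s ∈ Set.Icc (0 : ℝ) 1, HasDerivWithinAt (fun s => φ s - ψ s - s • (v x - w x))
      (v (φ s) - w (ψ s) - (v x - w x)) (Set.Icc 0 1) s := fun s hs => by
    simpa only [one_smul] using (((hφ s hs).fun_sub (hψ s hs)).fun_sub
      ((hasDerivAt_id' s).smul_const (v x - w x))).hasDerivWithinAt
  have hbound : ∀ s ∈ Set.Ico (0 : ℝ) 1,
      ‖v (φ s) - w (ψ s) - (v x - w x)‖ ≤ ℓ * a + L * (δ * Real.exp L) := by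
    intro s hs
    have hs' := hIco hs
    have hsplit : v (φ s) - w (ψ s) - (v x - w x)
        = ((v - w) (φ s) - (v - w) x) + (w (φ s) - w (ψ s)) := by
      simp only [Pi.sub_apply]; abel
    rw [hsplit]
    refine (norm_add_le _ _).trans (add_le_add ?_ ?_)
    · exact (lipschitzOnWith_iff_norm_sub_le.1 hvw (hφB s hs') hxB).trans
        (mul_le_mul_of_nonneg_left (hφx s hs') ℓ.coe_nonneg)
    · exact (lipschitzOnWith_iff_norm_sub_le.1 hw (hφB s hs') (hψB s hs')).trans
        (mul_le_mul_of_nonneg_left (hgap s hs') L.coe_nonneg)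
  simpa [hφ0, hψ0] using norm_image_sub_le_of_norm_deriv_le_segment_01' hderiv hbound

theorem norm_trajectory_sub_trajectory_sub_le_of_closedBall {v w : E → E} {φ ψ : ℝ → E} {x : E}
    {r K δ : ℝ} {L ℓ : ℝ≥0}
    (hφ : ∀ s ∈ Set.Icc (0 : ℝ) 1, HasDerivAt φ (v (φ s)) s)
    (hψ : ∀ s ∈ Set.Icc (0 : ℝ) 1, HasDerivAt ψ (w (ψ s)) s) (hφ0 : φ 0 = x) (hψ0 : ψ 0 = x)
    (hK : 0 ≤ K) (hKr : K < r) (hv : ∀ y ∈ closedBall x r, ‖v y‖ ≤ K)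
    (hw : ∀ y ∈ closedBall x r, ‖w y‖ ≤ K) (hwL : LipschitzOnWith L w (closedBall x r))
    (hvwL : LipschitzOnWith ℓ (v - w) (closedBall x r))
    (hδ : ∀ y ∈ closedBall x r, ‖v y - w y‖ ≤ δ) :
    ‖(φ 1 - ψ 1) - (v x - w x)‖ ≤ ℓ * K + L * (δ * Real.exp L) := by
  have hnear : ∀ {θ : ℝ → E} {f : E → E}, (∀ s ∈ Set.Icc (0 : ℝ) 1, HasDerivAt θ (f (θ s)) s) →
      θ 0 = x → (∀ y ∈ closedBall x r, ‖f y‖ ≤ K) → ∀ s ∈ Set.Icc (0 : ℝ) 1, ‖θ s - x‖ ≤ K :=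
    fun hθ hθ0 hf s hs =>
      (norm_trajectory_sub_le hθ hθ0 hK hKr hf s hs).trans (mul_le_of_le_one_right hK hs.2)
  have hφx := hnear hφ hφ0 hv
  have hψx := hnear hψ hψ0 hw
  exact norm_trajectory_sub_trajectory_sub_le hφ hψ hφ0 hψ0
    (fun s hs => mem_closedBall_iff_norm.2 ((hφx s hs).trans hKr.le))
    (fun s hs => mem_closedBall_iff_norm.2 ((hψx s hs).trans hKr.le)) hφx hwL hvwL hδ

end Trajectories

theorem exists_bound_lipschitzOnWith_of_contDiff {ι E F : Type*} [NormedAddCommGroup E]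
    [NormedSpace ℝ E] [NormedAddCommGroup F] [NormedSpace ℝ F] {S : Finset ι} {f : ι → E → F}
    {K : Set E} (hf : ∀ i ∈ S, ContDiff ℝ 1 (f i)) (hK : IsCompact K) :
    ∃ M : ℝ≥0, ∀ i ∈ S, (∀ y ∈ K, ‖f i y‖ ≤ M) ∧ LipschitzOnWith M (f i) K := by
  have hbound : ∀ i, ∃ M : ℝ≥0, i ∈ S → (∀ y ∈ K, ‖f i y‖ ≤ M) ∧ LipschitzOnWith M (f i) K := by
    intro i
    by_cases hi : i ∈ S
    · obtain ⟨C, hC⟩ := hK.exists_bound_of_continuousOn (hf i hi).continuous.continuousOn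
      obtain ⟨L, hL⟩ :=
        (hf i hi).locallyLipschitz.locallyLipschitzOn.exists_lipschitzOnWith_of_compact hK
      exact ⟨max C.toNNReal L, fun _ => ⟨fun y hy => (hC y hy).trans (by simp),
        hL.weaken (le_max_right _ _)⟩⟩
    · exact ⟨0, fun h => absurd h hi⟩
  choose M hM using hbound
  refine ⟨∑ i ∈ S, M i, fun i hi => ⟨fun y hy => ?_, (hM i hi).2.weaken ?_⟩⟩
  · exact ((hM i hi).1 y hy).trans (NNReal.coe_le_coe.2 (single_le_sum (fun _ _ => zero_le) hi))
  · exact single_le_sum (fun _ _ => zero_le) hi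

theorem norm_sum_smul_le_card_mul {ι F : Type*} [NormedAddCommGroup F] [NormedSpace ℝ F]
    {S : Finset ι} {c : ι → ℝ} {u : ι → F} {a b : ℝ} (hc : ∀ i ∈ S, |c i| ≤ a)
    (hu : ∀ i ∈ S, ‖u i‖ ≤ b) : ‖∑ i ∈ S, c i • u i‖ ≤ #S * (a * b) := by
  rw [← nsmul_eq_mul, ← sum_const]
  refine norm_sum_le_of_le S fun i hi => ?_
  rw [norm_smul, Real.norm_eq_abs]
  exact mul_le_mul (hc i hi) (hu i hi) (norm_nonneg _) ((abs_nonneg _).trans (hc i hi))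

theorem eq_zero_of_isBigO_norm_pow_succ {E F : Type*} [NormedAddCommGroup E] [NormedSpace ℝ E]
    [NormedAddCommGroup F] [NormedSpace ℝ F] {Q : E → F} {m : ℕ}
    (hQ : ∀ (s : ℝ) (u : E), Q (s • u) = s ^ m • Q u)
    (hO : Q =O[𝓝 0] fun t => ‖t‖ ^ (m + 1)) (u : E) : Q u = 0 := by
  obtain ⟨c, hc⟩ := isBigO_iff.1 hO
  have hsu : Tendsto (fun s : ℝ => s • u) (𝓝[>] 0) (𝓝 0) := by
    simpa using (Continuous.tendsto (f := fun s : ℝ => s • u) (by fun_prop) 0).mono_left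
      nhdsWithin_le_nhds
  have hev : ∀ᶠ s in 𝓝[>] (0 : ℝ), ‖Q u‖ ≤ c * ‖u‖ ^ (m + 1) * s := by
    filter_upwards [hsu.eventually hc, self_mem_nhdsWithin] with s hs (hs0 : 0 < s)
    simp only [hQ, norm_smul, norm_pow, Real.norm_eq_abs, abs_of_pos hs0, abs_mul, abs_norm] at hs
    have hsm : 0 < s ^ m := pow_pos hs0 m
    refine le_of_mul_le_mul_left ?_ hsm
    calc s ^ m * ‖Q u‖ ≤ c * (s * ‖u‖) ^ (m + 1) := hs
      _ = s ^ m * (c * ‖u‖ ^ (m + 1) * s) := by ring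
  have hlim : Tendsto (fun s : ℝ => c * ‖u‖ ^ (m + 1) * s) (𝓝[>] 0) (𝓝 0) := by
    simpa using (Continuous.tendsto (f := fun s : ℝ => c * ‖u‖ ^ (m + 1) * s) (by fun_prop)
      0).mono_left nhdsWithin_le_nhds
  exact norm_le_zero_iff.1 (ge_of_tendsto hlim hev)

theorem isBigO_norm_pow_of_bound {E F : Type*} [NormedAddCommGroup E] [NormedAddCommGroup F]
    {f : E → F} {p : ℕ} {C ε : ℝ} (hε : 0 < ε) (hf : ∀ t, ‖t‖ ≤ ε → ‖f t‖ ≤ C * ‖t‖ ^ p) :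
    f =O[𝓝 0] fun t => ‖t‖ ^ p := by
  refine IsBigO.of_bound C ?_
  filter_upwards [closedBall_mem_nhds (0 : E) hε] with t ht
  simpa using hf t (mem_closedBall_zero_iff.1 ht)

section MultiIndexSums

variable {k : ℕ}

theorem mem_mIdxs {N : ℕ} {α : Fin k → ℕ} : α ∈ mIdxs k N ↔ 0 < mdeg α ∧ mdeg α ≤ N := by
  simp only [mIdxs, mem_filter, Fintype.mem_piFinset, mem_range, mdeg, and_iff_right_iff_imp]
  exact fun h i =>
    Nat.lt_succ_of_le ((single_le_sum (fun _ _ => Nat.zero_le _) (mem_univ i)).trans h.2)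

def homIdxs (k m : ℕ) : Finset (Fin k → ℕ) :=
  (mIdxs k m).filter fun α => mdeg α = m

theorem mem_homIdxs {m : ℕ} {α : Fin k → ℕ} : α ∈ homIdxs k m ↔ 0 < m ∧ mdeg α = m := by
  simp only [homIdxs, mem_filter, mem_mIdxs]
  grind

theorem abs_tpow_div_mfact_le (t : Fin k → ℝ) (α : Fin k → ℕ) :
    |tpow t α / mfact α| ≤ ‖t‖ ^ mdeg α := by
  have hfact : (1 : ℝ) ≤ mfact α := by
    exact_mod_cast one_le_prod' fun i _ => Nat.one_le_iff_ne_zero.2 (Nat.factorial_ne_zero _)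
  rw [abs_div, Nat.abs_cast]
  refine (div_le_self (abs_nonneg _) hfact).trans ?_
  rw [tpow, mdeg, abs_prod, ← prod_pow_eq_pow_sum]
  exact prod_le_prod (fun i _ => abs_nonneg _) fun i _ => by
    rw [abs_pow]; exact pow_le_pow_left₀ (abs_nonneg _) (norm_le_pi_norm t i) _

theorem tpow_smul (s : ℝ) (t : Fin k → ℝ) (α : Fin k → ℕ) :
    tpow (s • t) α = s ^ mdeg α * tpow t α := by
  simp only [tpow, mdeg, Pi.smul_apply, smul_eq_mul, mul_pow, prod_mul_distrib,
    prod_pow_eq_pow_sum]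

theorem linearIndependent_tpow (k : ℕ) :
    LinearIndependent ℝ fun (α : Fin k → ℕ) (t : Fin k → ℝ) => tpow t α := by
  let ev : MvPolynomial (Fin k) ℝ →ₗ[ℝ] (Fin k → ℝ) → ℝ :=
    LinearMap.pi fun t => (MvPolynomial.aeval t).toLinearMap
  have hev : ev.ker = ⊥ := LinearMap.ker_eq_bot.2 fun p q h =>
    MvPolynomial.funext fun t => congrFun h t
  have hmon : (fun (α : Fin k → ℕ) (t : Fin k → ℝ) => tpow t α) =
      ev ∘ MvPolynomial.basisMonomials (Fin k) ℝ ∘ Finsupp.equivFunOnFinite.symm := by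
    ext α t
    simp [ev, tpow, MvPolynomial.aeval_monomial, Finsupp.prod_pow]
  rw [hmon]
  exact ((MvPolynomial.basisMonomials (Fin k) ℝ).linearIndependent.map' ev hev).comp
    Finsupp.equivFunOnFinite.symm Finsupp.equivFunOnFinite.symm.injective

noncomputable def taylorSum {E F : Type*} [AddCommGroup F] [Module ℝ F]
    (S : Finset (Fin k → ℕ)) (Z : (Fin k → ℕ) → E → F) (t : Fin k → ℝ) (y : E) : F :=
  ∑ α ∈ S, (tpow t α / mfact α) • Z α y

theorem taylorSum_smul {E F : Type*} [AddCommGroup F] [Module ℝ F] {S : Finset (Fin k → ℕ)}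
    {m : ℕ} (hS : ∀ α ∈ S, mdeg α = m) (Z : (Fin k → ℕ) → E → F) (s : ℝ) (t : Fin k → ℝ)
    (y : E) : taylorSum S Z (s • t) y = s ^ m • taylorSum S Z t y := by
  simp only [taylorSum, smul_sum, smul_smul]
  refine sum_congr rfl fun α hα => ?_
  rw [tpow_smul, hS α hα, mul_div_assoc]

theorem vSum_sub_vSum_eq_taylorSum_homIdxs {n m : ℕ}
    {X Y : (Fin k → ℕ) → (Fin n → ℝ) → (Fin n → ℝ)} {t : Fin k → ℝ} {y : Fin n → ℝ}
    (hXY : ∀ α ∈ mIdxs k m, mdeg α < m → X α y = Y α y) :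
    vSum m X t y - vSum m Y t y = taylorSum (homIdxs k m) (X - Y) t y := by
  rw [vSum, vSum, ← sum_sub_distrib, taylorSum, homIdxs, sum_filter]
  refine sum_congr rfl fun α hα => ?_
  split_ifs with h
  · simp [smul_sub]
  · rw [hXY α hα (lt_of_le_of_ne (mem_mIdxs.1 hα).2 h), sub_self]

theorem eq_zero_of_taylorSum_eq_zero {E ι : Type*} {S : Finset (Fin k → ℕ)}
    {Z : (Fin k → ℕ) → E → ι → ℝ} {y : E} (h : ∀ t, taylorSum S Z t y = 0) :
    ∀ α ∈ S, Z α y = 0 := by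
  intro α hα
  funext i
  have hcoef := linearIndependent_iff'.1 (linearIndependent_tpow k) S
    (fun β => Z β y i / mfact β) (funext fun t => by
      have hti := congrFun (h t) i
      simp only [taylorSum, Finset.sum_apply, Pi.smul_apply, smul_eq_mul, Pi.zero_apply] at hti ⊢
      rw [← hti]
      exact sum_congr rfl fun β _ => by ring) α hα
  have hfact : (mfact α : ℝ) ≠ 0 :=
    Nat.cast_ne_zero.2 (prod_ne_zero_iff.2 fun _ _ => Nat.factorial_ne_zero _)
  simpa [hfact] using hcoef

variable {F : Type*} [NormedAddCommGroup F] [NormedSpace ℝ F] {S : Finset (Fin k → ℕ)}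
  {t : Fin k → ℝ}

theorem norm_taylorSum_le {E : Type*} {Z : (Fin k → ℕ) → E → F} {y : E} {a M : ℝ}
    (ha : ∀ α ∈ S, ‖t‖ ^ mdeg α ≤ a)
    (hZ : ∀ α ∈ S, ‖Z α y‖ ≤ M) : ‖taylorSum S Z t y‖ ≤ #S * (a * M) :=
  norm_sum_smul_le_card_mul (fun α hα => (abs_tpow_div_mfact_le t α).trans (ha α hα)) hZ

theorem lipschitzOnWith_taylorSum {E : Type*} [NormedAddCommGroup E]
    {Z : (Fin k → ℕ) → E → F} {B : Set E} {a M : ℝ≥0} (ha : ∀ α ∈ S, ‖t‖ ^ mdeg α ≤ a)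
    (hZ : ∀ α ∈ S, LipschitzOnWith M (Z α) B) :
    LipschitzOnWith (#S * (a * M)) (taylorSum S Z t) B := by
  refine lipschitzOnWith_iff_norm_sub_le.2 fun y hy z hz => ?_
  have hsub : taylorSum S Z t y - taylorSum S Z t z
      = ∑ α ∈ S, (tpow t α / mfact α) • (Z α y - Z α z) := by
    simp only [taylorSum, smul_sub, sum_sub_distrib]
  calc ‖taylorSum S Z t y - taylorSum S Z t z‖ ≤ #S * (a * (M * ‖y - z‖)) := hsub ▸
        norm_sum_smul_le_card_mul (fun α hα => (abs_tpow_div_mfact_le t α).trans (ha α hα))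
          fun α hα => lipschitzOnWith_iff_norm_sub_le.1 (hZ α hα) hy hz
    _ = ↑(#S * (a * M) : ℝ≥0) * ‖y - z‖ := by push_cast; ring

end MultiIndexSums

section Representation

variable {n k m : ℕ} {X Y : (Fin k → ℕ) → (Fin n → ℝ) → (Fin n → ℝ)} {x : Fin n → ℝ} {r : ℝ}

theorem norm_trajectory_sub_trajectory_sub_taylorSum_le {MX MY MZ : ℝ≥0}
    (hMX : ∀ α ∈ mIdxs k m, ∀ y ∈ closedBall x r, ‖X α y‖ ≤ MX)
    (hMY : ∀ α ∈ mIdxs k m,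
      (∀ y ∈ closedBall x r, ‖Y α y‖ ≤ MY) ∧ LipschitzOnWith MY (Y α) (closedBall x r))
    (hMZ : ∀ α ∈ homIdxs k m, (∀ y ∈ closedBall x r, ‖(X - Y) α y‖ ≤ MZ) ∧
      LipschitzOnWith MZ ((X - Y) α) (closedBall x r))
    (hXY : ∀ α ∈ mIdxs k m, mdeg α < m → ∀ y ∈ closedBall x r, X α y = Y α y)
    {t : Fin k → ℝ} (ht : ‖t‖ ≤ 1) (htr : (#(mIdxs k m) : ℝ) * (‖t‖ * (MX + MY)) < r)
    {φ ψ : ℝ → Fin n → ℝ} (hφ0 : φ 0 = x) (hψ0 : ψ 0 = x)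
    (hφ : ∀ s ∈ Set.Icc (0 : ℝ) 1, HasDerivAt φ (vSum m X t (φ s)) s)
    (hψ : ∀ s ∈ Set.Icc (0 : ℝ) 1, HasDerivAt ψ (vSum m Y t (ψ s)) s) :
    ‖(φ 1 - ψ 1) - taylorSum (homIdxs k m) (X - Y) t x‖ ≤ #(homIdxs k m) * MZ * #(mIdxs k m) *
      (MX + MY + MY * Real.exp (#(mIdxs k m) * MY)) * ‖t‖ ^ (m + 1) := by
  have hpow : ∀ α ∈ mIdxs k m, ‖t‖ ^ mdeg α ≤ ‖t‖ := fun α hα =>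
    pow_le_of_le_one (norm_nonneg t) ht (mem_mIdxs.1 hα).1.ne'
  have hpowH : ∀ α ∈ homIdxs k m, ‖t‖ ^ mdeg α ≤ ‖t‖ ^ m := fun α hα =>
    (mem_homIdxs.1 hα).2 ▸ le_rfl
  have hdiff : ∀ y ∈ closedBall x r,
      vSum m X t y - vSum m Y t y = taylorSum (homIdxs k m) (X - Y) t y :=
    fun y hy => vSum_sub_vSum_eq_taylorSum_homIdxs fun α hα hlt => hXY α hα hlt y hy
  have hLipXY : LipschitzOnWith (#(homIdxs k m) * (‖t‖₊ ^ m * MZ)) (vSum m X t - vSum m Y t)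
      (closedBall x r) := by
    refine lipschitzOnWith_iff_norm_sub_le.2 fun y hy z hz => ?_
    simp only [Pi.sub_apply, hdiff y hy, hdiff z hz]
    exact lipschitzOnWith_iff_norm_sub_le.1 (lipschitzOnWith_taylorSum (by simpa using hpowH)
      fun α hα => (hMZ α hα).2) hy hz
  have hflows := norm_trajectory_sub_trajectory_sub_le_of_closedBall hφ hψ hφ0 hψ0
    (by positivity) htr
    (fun y hy => norm_taylorSum_le hpow fun α hα =>
      (hMX α hα y hy).trans (le_add_of_nonneg_right MY.coe_nonneg))
    (fun y hy => norm_taylorSum_le hpow fun α hα =>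
      ((hMY α hα).1 y hy).trans (le_add_of_nonneg_left MX.coe_nonneg))
    (lipschitzOnWith_taylorSum (a := ‖t‖₊) hpow fun α hα => (hMY α hα).2) hLipXY
    fun y hy => hdiff y hy ▸ norm_taylorSum_le hpowH fun α hα => (hMZ α hα).1 y hy
  rw [hdiff x (mem_closedBall_self ((by positivity : (0 : ℝ) ≤ _).trans htr.le))] at hflows
  have hexp : Real.exp (#(mIdxs k m) * (‖t‖ * MY)) ≤ Real.exp (#(mIdxs k m) * MY) := by
    gcongr
    exact mul_le_of_le_one_left MY.coe_nonneg ht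
  refine hflows.trans ?_
  push_cast
  calc _ ≤ #(homIdxs k m) * (‖t‖ ^ m * MZ) * (#(mIdxs k m) * (‖t‖ * (MX + MY))) +
        #(mIdxs k m) * (‖t‖ * MY) * (#(homIdxs k m) * (‖t‖ ^ m * MZ) *
          Real.exp (#(mIdxs k m) * MY)) := by gcongr
    _ = _ := by ring

theorem isBigO_trajectory_sub_trajectory_sub_taylorSum (hr : 0 < r)
    (hX : ∀ α, ContDiff ℝ 1 (X α)) (hY : ∀ α, ContDiff ℝ 1 (Y α))
    (hXY : ∀ α ∈ mIdxs k m, mdeg α < m → ∀ y ∈ closedBall x r, X α y = Y α y)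
    {φ ψ : (Fin k → ℝ) → ℝ → (Fin n → ℝ)} (hφ0 : ∀ t, φ t 0 = x) (hψ0 : ∀ t, ψ t 0 = x)
    (hφ : ∀ t, ∀ s ∈ Set.Icc (0 : ℝ) 1, HasDerivAt (φ t) (vSum m X t (φ t s)) s)
    (hψ : ∀ t, ∀ s ∈ Set.Icc (0 : ℝ) 1, HasDerivAt (ψ t) (vSum m Y t (ψ t s)) s) :
    (fun t => (φ t 1 - ψ t 1) - taylorSum (homIdxs k m) (X - Y) t x) =O[𝓝 0]
      fun t => ‖t‖ ^ (m + 1) := by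
  obtain ⟨MX, hMX⟩ := exists_bound_lipschitzOnWith_of_contDiff (S := mIdxs k m)
    (fun α _ => hX α) (isCompact_closedBall x r)
  obtain ⟨MY, hMY⟩ := exists_bound_lipschitzOnWith_of_contDiff (S := mIdxs k m)
    (fun α _ => hY α) (isCompact_closedBall x r)
  obtain ⟨MZ, hMZ⟩ := exists_bound_lipschitzOnWith_of_contDiff (S := homIdxs k m) (f := X - Y)
    (fun α _ => (hX α).sub (hY α)) (isCompact_closedBall x r)
  set A : ℝ := #(mIdxs k m) * (MX + MY)
  have hε : 0 < min 1 (r / (2 * (A + 1))) := by positivity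
  refine isBigO_norm_pow_of_bound hε fun t ht =>
    norm_trajectory_sub_trajectory_sub_taylorSum_le (fun α hα => (hMX α hα).1) hMY hMZ hXY
      (ht.trans (min_le_left _ _)) ?_ (hφ0 t) (hψ0 t) (hφ t) (hψ t)
  have htA : ‖t‖ * (2 * (A + 1)) ≤ r :=
    (le_div_iff₀ (by positivity)).1 (ht.trans (min_le_right _ _))
  have hA : 0 ≤ A := by positivity
  calc (#(mIdxs k m) : ℝ) * (‖t‖ * (MX + MY)) = ‖t‖ * A := by ring
    _ < r := by nlinarith [norm_nonneg t]

end Representation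

theorem stmt13_general (n k : ℕ) (U : Set (Fin n → ℝ))
    (hU : IsOpen U)
    (γ : (Fin n → ℝ) → (Fin k → ℝ) → (Fin n → ℝ))
    (X Y : (Fin k → ℕ) → (Fin n → ℝ) → (Fin n → ℝ))
    (hXs : ∀ α, ContDiff ℝ (⊤ : ℕ∞) (X α)) (hYs : ∀ α, ContDiff ℝ (⊤ : ℕ∞) (Y α))
    (φX φY : ℕ → (Fin k → ℝ) → ℝ → (Fin n → ℝ) → (Fin n → ℝ))
    (hφX0 : ∀ N t x, φX N t 0 x = x)
    (hφY0 : ∀ N t x, φY N t 0 x = x)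
    (hφX' : ∀ N t x, ∀ s ∈ Set.Icc (0 : ℝ) 1,
      HasDerivAt (fun s' => φX N t s' x) (vSum N X t (φX N t s x)) s)
    (hφY' : ∀ N t x, ∀ s ∈ Set.Icc (0 : ℝ) 1,
      HasDerivAt (fun s' => φY N t s' x) (vSum N Y t (φY N t s x)) s)
    (hAX : ∀ N : ℕ, ∀ x ∈ U, ∃ C > (0 : ℝ), ∃ ε > (0 : ℝ), ∀ t : Fin k → ℝ,
      ‖t‖ ≤ ε → ‖γ x t - φX N t 1 x‖ ≤ C * ‖t‖ ^ (N + 1))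
    (hAY : ∀ N : ℕ, ∀ x ∈ U, ∃ C > (0 : ℝ), ∃ ε > (0 : ℝ), ∀ t : Fin k → ℝ,
      ‖t‖ ≤ ε → ‖γ x t - φY N t 1 x‖ ≤ C * ‖t‖ ^ (N + 1)) :
    ∀ α : Fin k → ℕ, 0 < mdeg α → ∀ x ∈ U, X α x = Y α x := by
  suffices h : ∀ m α, mdeg α = m → 0 < m → ∀ x ∈ U, X α x = Y α x from
    fun α hα x hx => h _ α rfl hα x hx
  intro m
  induction m using Nat.strong_induction_on with
  | _ m ih =>
  intro α hαm hm x hx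
  obtain ⟨r, hr, hrU⟩ := nhds_basis_closedBall.mem_iff.1 (hU.mem_nhds hx)
  obtain ⟨CX, -, εX, hεX, hγX⟩ := hAX m x hx
  obtain ⟨CY, -, εY, hεY, hγY⟩ := hAY m x hx
  have hflows := isBigO_trajectory_sub_trajectory_sub_taylorSum hr
    (fun β => (hXs β).of_le (by exact_mod_cast le_top))
    (fun β => (hYs β).of_le (by exact_mod_cast le_top))
    (fun β hβ hβm y hy => ih _ hβm β rfl (mem_mIdxs.1 hβ).1 y (hrU hy))
    (φ := fun t s => φX m t s x) (ψ := fun t s => φY m t s x)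
    (hφX0 m · x) (hφY0 m · x) (hφX' m · x) (hφY' m · x)
  have hhom : (fun t => taylorSum (homIdxs k m) (X - Y) t x) =O[𝓝 0] fun t => ‖t‖ ^ (m + 1) :=
    (((isBigO_norm_pow_of_bound hεY hγY).sub (isBigO_norm_pow_of_bound hεX hγX)).sub
      hflows).congr_left fun t => by abel
  have hzero := eq_zero_of_isBigO_norm_pow_succ
    (taylorSum_smul (fun β hβ => (mem_homIdxs.1 hβ).2) (X - Y) · · x) hhom
  exact sub_eq_zero.1 (eq_zero_of_taylorSum_eq_zero hzero α (mem_homIdxs.2 ⟨hm, hαm⟩))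

/-- Uniqueness of the exponential representation: if two collections of smooth
vector fields `X_α`, `Y_α` both satisfy
`γ(x,t) = exp(∑_{0<|α|≤N} t^α X_α/α!)(x) + O(|t|^{N+1})` for every `N`
(the exponentials being given by time-one flows `φX`, `φY` of the respective
vector fields), then `X_α = Y_α` on `U`. -/
theorem stmt13 (n k : ℕ) (x₀ : Fin n → ℝ) (U : Set (Fin n → ℝ))
    (hU : IsOpen U) (hx₀ : x₀ ∈ U)
    (γ : (Fin n → ℝ) → (Fin k → ℝ) → (Fin n → ℝ))
    (hγs : ContDiff ℝ (⊤ : ℕ∞) fun q : (Fin n → ℝ) × (Fin k → ℝ) => γ q.1 q.2)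
    (hγ0 : ∀ x, γ x 0 = x)
    (X Y : (Fin k → ℕ) → (Fin n → ℝ) → (Fin n → ℝ))
    (hXs : ∀ α, ContDiff ℝ (⊤ : ℕ∞) (X α)) (hYs : ∀ α, ContDiff ℝ (⊤ : ℕ∞) (Y α))
    (φX φY : ℕ → (Fin k → ℝ) → ℝ → (Fin n → ℝ) → (Fin n → ℝ))
    (hφX0 : ∀ N t x, φX N t 0 x = x)
    (hφY0 : ∀ N t x, φY N t 0 x = x)
    (hφX' : ∀ N t x, ∀ s ∈ Set.Icc (0 : ℝ) 1,
      HasDerivAt (fun s' => φX N t s' x) (vSum N X t (φX N t s x)) s)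
    (hφY' : ∀ N t x, ∀ s ∈ Set.Icc (0 : ℝ) 1,
      HasDerivAt (fun s' => φY N t s' x) (vSum N Y t (φY N t s x)) s)
    (hAX : ∀ N : ℕ, ∀ x ∈ U, ∃ C > (0 : ℝ), ∃ ε > (0 : ℝ), ∀ t : Fin k → ℝ,
      ‖t‖ ≤ ε → ‖γ x t - φX N t 1 x‖ ≤ C * ‖t‖ ^ (N + 1))
    (hAY : ∀ N : ℕ, ∀ x ∈ U, ∃ C > (0 : ℝ), ∃ ε > (0 : ℝ), ∀ t : Fin k → ℝ,
      ‖t‖ ≤ ε → ‖γ x t - φY N t 1 x‖ ≤ C * ‖t‖ ^ (N + 1)) :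
    ∀ α : Fin k → ℕ, 0 < mdeg α → ∀ x ∈ U, X α x = Y α x :=
  stmt13_general n k U hU γ X Y hXs hYs φX φY hφX0 hφY0 hφX' hφY' hAX hAY
end

section
/- For any p ≥ 1, s > 0, and σ ∈ (0,1) there exists c > 0 such that for every r ∈ (0,1] and every real-valued f ∈ C_0^∞(ℝᵖ) with f(x) = 0 for all |x| ≥ r and f(x) ≥ 1 for all |x| ≤ σr, one has ‖f‖_{H^s(ℝᵖ)} ≥ c r^{−s} r^{p/2}. -/
/-!
Let `m = ⌈s⌉₊` and pick `h` with `‖h‖ = 2r`. For `x` in the ball of radius `σ r`, every point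
`x + k • h` with `k ≥ 1` lies where `f` vanishes, so the `m`-th forward difference `Δ_h^m f`
equals `± f` there, and its squared `L²` norm is at least the volume `(σ r)ᵖ · |B₁|` of that
ball. On the Fourier side `Δ_h^m` is multiplication by `(𝐞 ⟪h, ξ⟫ - 1)ᵐ`, and
`|𝐞 θ - 1| ≤ min 2 (2π|θ|)` gives `|𝐞 ⟪h, ξ⟫ - 1|^(2m) ≤ 4ᵐ (4π r)^(2s) (1 + |ξ|²)ˢ`,
so by Plancherel the same `L²` norm is at most `4ᵐ (4π r)^(2s) ‖f‖²_{Hˢ}`.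
-/

open MeasureTheory Metric Real
open scoped FourierTransform fwdDiff RealInnerProductSpace ContDiff SchwartzMap

lemma pow_le_two_pow_mul_rpow {a b t : ℝ} {n : ℕ} (ha : 0 ≤ a) (ha2 : a ≤ 2) (hab : a ≤ b)
    (ht : 0 ≤ t) (htn : t ≤ n) : a ^ n ≤ 2 ^ n * b ^ t := by
  rcases le_total 1 b with hb | hb
  · calc a ^ n ≤ 2 ^ n := pow_le_pow_left₀ ha ha2 n
      _ ≤ 2 ^ n * b ^ t := le_mul_of_one_le_right (by positivity) (one_le_rpow hb ht)
  · calc a ^ n ≤ b ^ (n : ℝ) := by rw [rpow_natCast]; exact pow_le_pow_left₀ ha hab n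
      _ ≤ b ^ t := rpow_le_rpow_of_exponent_ge' (ha.trans hab) hb ht htn
      _ ≤ 2 ^ n * b ^ t :=
        le_mul_of_one_le_left (rpow_nonneg (ha.trans hab) t) (one_le_pow₀ one_le_two)

lemma MeasureTheory.measureReal_le_integral_norm_sq {X F : Type*} [MeasurableSpace X]
    [NormedAddCommGroup F] {μ : Measure X} {g : X → F} {S : Set X} (hS : MeasurableSet S)
    (hμS : μ S ≠ ⊤) (hg : Integrable (fun x ↦ ‖g x‖ ^ 2) μ) (hgS : ∀ x ∈ S, 1 ≤ ‖g x‖) :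
    μ.real S ≤ ∫ x, ‖g x‖ ^ 2 ∂μ :=
  calc μ.real S = μ.real S • (1 : ℝ) := (smul_eq_mul _ _).trans (mul_one _) |>.symm
    _ ≤ ∫ x in S, ‖g x‖ ^ 2 ∂μ :=
      setIntegral_ge_of_const_le hS hμS (fun x hx ↦ one_le_pow₀ (hgS x hx)) hg.integrableOn
    _ ≤ ∫ x, ‖g x‖ ^ 2 ∂μ := setIntegral_le_integral hg (.of_forall fun _ ↦ by positivity)

section FwdDiff

variable {M G : Type*} [AddCommMonoid M] [AddCommGroup G]

lemma fwdDiff_iter_eq_neg_one_pow_smul {h : M} {g : M → G} {n : ℕ} {y : M}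
    (hg : ∀ k ∈ Finset.Icc 1 n, g (y + k • h) = 0) :
    Δ_[h] ^[n] g y = (-1 : ℤ) ^ n • g y := by
  rw [fwdDiff_iter_eq_sum_shift, Finset.sum_eq_single 0]
  · simp
  · intro k hk hk0
    rw [hg k (Finset.mem_Icc.2 ⟨Nat.one_le_iff_ne_zero.2 hk0,
      Nat.lt_succ_iff.1 (Finset.mem_range.1 hk)⟩), smul_zero]
  · simp

end FwdDiff

section Normed

variable {V E : Type*} [NormedAddCommGroup V] [NormedAddCommGroup E]

lemma HasCompactSupport.fwdDiff_iter {g : V → E} (hg : HasCompactSupport g) (h : V) (n : ℕ) :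
    HasCompactSupport (Δ_[h] ^[n] g) := by
  induction n with
  | zero => exact hg
  | succ n ih =>
    rw [Function.iterate_succ_apply']
    exact (ih.comp_isClosedEmbedding (Homeomorph.addRight h).isClosedEmbedding).sub ih

lemma ContDiff.fwdDiff_iter [NormedSpace ℝ V] [NormedSpace ℝ E] {k : WithTop ℕ∞} {g : V → E}
    (hg : ContDiff ℝ k g) (h : V) (n : ℕ) : ContDiff ℝ k (Δ_[h] ^[n] g) := by
  induction n with
  | zero => exact hg
  | succ n ih =>
    rw [Function.iterate_succ_apply']
    exact (ih.comp (contDiff_id.add contDiff_const)).sub ih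

lemma MeasureTheory.Integrable.fwdDiff_iter [MeasurableSpace V] [MeasurableAdd V] {μ : Measure V}
    [μ.IsAddRightInvariant] {g : V → E} (hg : Integrable g μ) (h : V) (n : ℕ) :
    Integrable (Δ_[h] ^[n] g) μ := by
  induction n with
  | zero => exact hg
  | succ n ih =>
    rw [Function.iterate_succ_apply']
    exact (ih.comp_add_right h).sub ih

lemma le_norm_add_nsmul [NormedSpace ℝ V] {x h : V} {r : ℝ} (hx : ‖x‖ ≤ r)
    (hh : ‖h‖ = 2 * r) {k : ℕ} (hk : 1 ≤ k) : r ≤ ‖x + k • h‖ := by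
  have hr : 0 ≤ r := (norm_nonneg x).trans hx
  have hkh : 2 * r ≤ ‖k • h‖ := by
    rw [RCLike.norm_nsmul ℝ, hh, nsmul_eq_mul]
    nlinarith [(Nat.one_le_cast (α := ℝ)).2 hk]
  have htri := norm_sub_norm_le (k • h) (-x)
  rw [norm_neg, sub_neg_eq_add, add_comm] at htri
  linarith

end Normed

lemma Real.norm_fourierChar_sub_one_le (θ : ℝ) : ‖(𝐞 θ : ℂ) - 1‖ ≤ 2 * π * |θ| := by
  have hθ : ‖2 * π * θ‖ = 2 * π * |θ| := by
    rw [norm_mul, norm_mul, norm_two, norm_of_nonneg pi_pos.le, norm_eq_abs]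
  rw [fourierChar_apply, mul_comm, ← hθ]
  exact norm_exp_I_mul_ofReal_sub_one_le

lemma Real.norm_fourierChar_sub_one_le_two (θ : ℝ) : ‖(𝐞 θ : ℂ) - 1‖ ≤ 2 := by
  calc ‖(𝐞 θ : ℂ) - 1‖ ≤ ‖(𝐞 θ : ℂ)‖ + ‖(1 : ℂ)‖ := norm_sub_le _ _
    _ = 2 := by rw [Circle.norm_coe, norm_one]; norm_num

lemma Real.norm_fourierChar_inner_sub_one_pow_le {V : Type*} [NormedAddCommGroup V]
    [InnerProductSpace ℝ V] (h ξ : V) {s : ℝ} {n : ℕ} (hs : 0 ≤ s) (hsn : 2 * s ≤ n) :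
    ‖(𝐞 ⟪h, ξ⟫ : ℂ) - 1‖ ^ n ≤ 2 ^ n * (2 * π * ‖h‖) ^ (2 * s) * (1 + ‖ξ‖ ^ 2) ^ s := by
  have hinner : 2 * π * |⟪h, ξ⟫| ≤ 2 * π * ‖h‖ * ‖ξ‖ := by
    rw [mul_assoc _ ‖h‖]
    exact mul_le_mul_of_nonneg_left (abs_real_inner_le_norm h ξ) (by positivity)
  calc ‖(𝐞 ⟪h, ξ⟫ : ℂ) - 1‖ ^ n ≤ 2 ^ n * (2 * π * ‖h‖ * ‖ξ‖) ^ (2 * s) :=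
        pow_le_two_pow_mul_rpow (norm_nonneg _) (norm_fourierChar_sub_one_le_two _)
          ((norm_fourierChar_sub_one_le _).trans hinner) (by positivity) hsn
    _ = 2 ^ n * (2 * π * ‖h‖) ^ (2 * s) * (‖ξ‖ ^ 2) ^ s := by
      rw [mul_rpow (by positivity) (norm_nonneg _), rpow_mul (norm_nonneg _), rpow_two]
      ring
    _ ≤ 2 ^ n * (2 * π * ‖h‖) ^ (2 * s) * (1 + ‖ξ‖ ^ 2) ^ s := by
      gcongr
      linarith

section Fourier

variable {V E : Type*} [NormedAddCommGroup V] [InnerProductSpace ℝ V] [FiniteDimensional ℝ V]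
  [MeasurableSpace V] [BorelSpace V] [NormedAddCommGroup E] [NormedSpace ℂ E]

lemma Real.fourier_fwdDiff {g : V → E} (hg : Integrable g) (h ξ : V) :
    𝓕 (Δ_[h] g) ξ = ((𝐞 ⟪h, ξ⟫ : ℂ) - 1) • 𝓕 g ξ := by
  have htrans : 𝓕 (fun x ↦ g (x + h)) ξ = 𝐞 ⟪h, ξ⟫ • 𝓕 g ξ :=
    congrFun (VectorFourier.fourierIntegral_comp_add_right 𝐞 volume (innerₗ V) g h) ξ
  simp only [fwdDiff, Real.fourier_eq, smul_sub] at htrans ⊢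
  rw [integral_sub ((Real.fourierIntegral_convergent_iff ξ).2 (hg.comp_add_right h))
    ((Real.fourierIntegral_convergent_iff ξ).2 hg), htrans, sub_smul, one_smul, Circle.smul_def]

lemma Real.fourier_fwdDiff_iter {g : V → E} (hg : Integrable g) (h ξ : V) (n : ℕ) :
    𝓕 (Δ_[h] ^[n] g) ξ = ((𝐞 ⟪h, ξ⟫ : ℂ) - 1) ^ n • 𝓕 g ξ := by
  induction n with
  | zero => simp
  | succ n ih =>
    rw [Function.iterate_succ_apply', Real.fourier_fwdDiff (hg.fwdDiff_iter h n), ih, pow_succ',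
      mul_smul]

end Fourier

section Plancherel

variable {V E : Type*} [NormedAddCommGroup V] [InnerProductSpace ℝ V] [FiniteDimensional ℝ V]
  [MeasurableSpace V] [BorelSpace V] [NormedAddCommGroup E]

lemma SchwartzMap.integrable_one_add_norm_sq_rpow_mul_norm_sq [NormedSpace ℝ E] (f : 𝓢(V, E))
    (s : ℝ) : Integrable (fun ξ ↦ (1 + ‖ξ‖ ^ 2) ^ s * ‖f ξ‖ ^ 2) := by
  have hg := Function.hasTemperateGrowth_one_add_norm_sq_rpow V (s / 2)
  refine (((smulLeftCLM E (fun ξ : V ↦ (1 + ‖ξ‖ ^ 2) ^ (s / 2)) f).memLp 2).integrable_norm_pow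
    two_ne_zero).congr (.of_forall fun ξ ↦ ?_)
  dsimp only
  rw [smulLeftCLM_apply_apply hg, norm_smul, mul_pow, norm_of_nonneg (by positivity),
    ← rpow_natCast, ← rpow_mul (by positivity)]
  norm_num

lemma integrable_one_add_norm_sq_rpow_mul_norm_fourier_sq [NormedSpace ℂ E] {g : V → E}
    (hg : ContDiff ℝ ∞ g) (hgc : HasCompactSupport g) (s : ℝ) :
    Integrable (fun ξ ↦ (1 + ‖ξ‖ ^ 2) ^ s * ‖𝓕 g ξ‖ ^ 2) :=
  (𝓕 (hgc.toSchwartzMap hg)).integrable_one_add_norm_sq_rpow_mul_norm_sq s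

lemma integral_norm_sq_fourier_of_hasCompactSupport [InnerProductSpace ℂ E] [CompleteSpace E]
    {g : V → E} (hg : ContDiff ℝ ∞ g) (hgc : HasCompactSupport g) :
    ∫ ξ, ‖𝓕 g ξ‖ ^ 2 = ∫ x, ‖g x‖ ^ 2 :=
  SchwartzMap.integral_norm_sq_fourier (hgc.toSchwartzMap hg)

end Plancherel

section Sobolev

variable {V E : Type*} [NormedAddCommGroup V] [InnerProductSpace ℝ V] [FiniteDimensional ℝ V]
  [MeasurableSpace V] [BorelSpace V] [NormedAddCommGroup E]

noncomputable def sobolevNorm [NormedSpace ℂ E] (s : ℝ) (f : V → E) : ℝ :=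
  √(∫ ξ, (1 + ‖ξ‖ ^ 2) ^ s * ‖𝓕 f ξ‖ ^ 2)

lemma sobolevNorm_nonneg [NormedSpace ℂ E] (s : ℝ) (f : V → E) : 0 ≤ sobolevNorm s f :=
  sqrt_nonneg _

lemma sq_sobolevNorm [NormedSpace ℂ E] (s : ℝ) (f : V → E) :
    sobolevNorm s f ^ 2 = ∫ ξ, (1 + ‖ξ‖ ^ 2) ^ s * ‖𝓕 f ξ‖ ^ 2 :=
  sq_sqrt (integral_nonneg fun _ ↦ by positivity)

variable [InnerProductSpace ℂ E] [CompleteSpace E]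

lemma integral_norm_sq_fwdDiff_iter_le {f : V → E} (hf : ContDiff ℝ ∞ f)
    (hfc : HasCompactSupport f) (h : V) {s : ℝ} {m : ℕ} (hs : 0 ≤ s) (hsm : s ≤ m) :
    ∫ x, ‖Δ_[h] ^[m] f x‖ ^ 2 ≤ 4 ^ m * (2 * π * ‖h‖) ^ (2 * s) * sobolevNorm s f ^ 2 := by
  rw [← integral_norm_sq_fourier_of_hasCompactSupport (hf.fwdDiff_iter h m)
    (hfc.fwdDiff_iter h m), sq_sobolevNorm, ← integral_const_mul]
  refine integral_mono_of_nonneg (.of_forall fun _ ↦ by positivity)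
    ((integrable_one_add_norm_sq_rpow_mul_norm_fourier_sq hf hfc s).const_mul _)
    (.of_forall fun ξ ↦ ?_)
  have hmult := Real.norm_fourierChar_inner_sub_one_pow_le h ξ hs (n := 2 * m)
    (by push_cast; linarith)
  dsimp only
  rw [Real.fourier_fwdDiff_iter (hf.continuous.integrable_of_hasCompactSupport hfc)]
  calc ‖((𝐞 ⟪h, ξ⟫ : ℂ) - 1) ^ m • 𝓕 f ξ‖ ^ 2
        = ‖(𝐞 ⟪h, ξ⟫ : ℂ) - 1‖ ^ (2 * m) * ‖𝓕 f ξ‖ ^ 2 := by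
        rw [norm_smul, norm_pow, mul_pow, ← pow_mul, mul_comm m]
    _ ≤ 2 ^ (2 * m) * (2 * π * ‖h‖) ^ (2 * s) * (1 + ‖ξ‖ ^ 2) ^ s * ‖𝓕 f ξ‖ ^ 2 := by gcongr
    _ = _ := by rw [pow_mul]; ring

lemma measureReal_le_sobolevNorm_sq [Nontrivial V] {f : V → E} (hf : ContDiff ℝ ∞ f)
    (hfc : HasCompactSupport f) {r s : ℝ} (hr : 0 ≤ r) (hs : 0 ≤ s)
    (hvan : ∀ x, r ≤ ‖x‖ → f x = 0) {S : Set V} (hS : MeasurableSet S)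
    (hSr : S ⊆ closedBall 0 r) (hfS : ∀ x ∈ S, 1 ≤ ‖f x‖) :
    volume.real S ≤ 4 ^ ⌈s⌉₊ * (4 * π * r) ^ (2 * s) * sobolevNorm s f ^ 2 := by
  obtain ⟨h, hh⟩ := exists_norm_eq V (by positivity : 0 ≤ 2 * r)
  set m := ⌈s⌉₊
  have hG : ∀ x ∈ S, ‖Δ_[h] ^[m] f x‖ = ‖f x‖ := fun x hx ↦ by
    rw [fwdDiff_iter_eq_neg_one_pow_smul fun k hk ↦ hvan _ (le_norm_add_nsmul
      (mem_closedBall_zero_iff.1 (hSr hx)) hh (Finset.mem_Icc.1 hk).1), norm_zsmul ℝ]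
    simp
  have hGi : Integrable fun x ↦ ‖Δ_[h] ^[m] f x‖ ^ 2 :=
    ((hf.fwdDiff_iter h m).continuous.memLp_of_hasCompactSupport
      (hfc.fwdDiff_iter h m)).integrable_norm_pow two_ne_zero
  calc volume.real S ≤ ∫ x, ‖Δ_[h] ^[m] f x‖ ^ 2 :=
        measureReal_le_integral_norm_sq hS
          ((measure_mono hSr).trans_lt measure_closedBall_lt_top).ne hGi
          fun x hx ↦ (hG x hx).symm ▸ hfS x hx
    _ ≤ 4 ^ m * (2 * π * ‖h‖) ^ (2 * s) * sobolevNorm s f ^ 2 :=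
        integral_norm_sq_fwdDiff_iter_le hf hfc h hs (Nat.le_ceil s)
    _ = 4 ^ m * (4 * π * r) ^ (2 * s) * sobolevNorm s f ^ 2 := by
        rw [hh]; ring_nf

end Sobolev

theorem exists_pos_mul_rpow_le_sobolevNorm {V E : Type*} [NormedAddCommGroup V]
    [InnerProductSpace ℝ V] [FiniteDimensional ℝ V] [MeasurableSpace V] [BorelSpace V]
    [Nontrivial V] [NormedAddCommGroup E] [InnerProductSpace ℂ E] [CompleteSpace E]
    {s σ : ℝ} (hs : 0 ≤ s) (hσ0 : 0 < σ) (hσ1 : σ ≤ 1) :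
    ∃ c > (0 : ℝ), ∀ r > (0 : ℝ), ∀ f : V → E, ContDiff ℝ ∞ f → HasCompactSupport f →
      (∀ x, r ≤ ‖x‖ → f x = 0) → (∀ x, ‖x‖ ≤ σ * r → 1 ≤ ‖f x‖) →
        c * r ^ (-s) * r ^ ((Module.finrank ℝ V : ℝ) / 2) ≤ sobolevNorm s f := by
  set d := Module.finrank ℝ V
  set vol := volume.real (ball (0 : V) 1)
  set A := 4 ^ ⌈s⌉₊ * (4 * π) ^ (2 * s)
  have hvol : 0 < vol :=
    ENNReal.toReal_pos (measure_ball_pos _ _ one_pos).ne' measure_ball_lt_top.ne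
  refine ⟨√(σ ^ d * vol / A), by positivity, fun r hr f hf hfc hvan hlow ↦ ?_⟩
  have hball : volume.real (ball (0 : V) (σ * r)) = (σ * r) ^ d * vol := by
    rw [measureReal_def, Measure.addHaar_ball _ _ (by positivity), ENNReal.toReal_mul,
      ENNReal.toReal_ofReal (by positivity)]; rfl
  have key : (σ * r) ^ d * vol ≤ A * r ^ (2 * s) * sobolevNorm s f ^ 2 := by
    rw [← hball]
    refine (measureReal_le_sobolevNorm_sq hf hfc hr.le hs hvan measurableSet_ball
      (ball_subset_closedBall.trans (closedBall_subset_closedBall (by nlinarith)))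
      fun x hx ↦ hlow x (mem_ball_zero_iff.1 hx).le).trans_eq ?_
    rw [mul_rpow (by positivity) hr.le]; ring
  have hlhs : (√(σ ^ d * vol / A) * r ^ (-s) * r ^ ((d : ℝ) / 2)) ^ 2 =
      (σ * r) ^ d * vol / (A * r ^ (2 * s)) := by
    rw [mul_pow, mul_pow, sq_sqrt (by positivity), ← rpow_mul_natCast hr.le,
      ← rpow_mul_natCast hr.le, Nat.cast_ofNat, div_mul_cancel₀ _ two_ne_zero,
      show -s * 2 = -(2 * s) by ring, rpow_neg hr.le, rpow_natCast, mul_pow]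
    field_simp
  rw [← pow_le_pow_iff_left₀ (by positivity) (sobolevNorm_nonneg s f) two_ne_zero, hlhs,
    div_le_iff₀ (by positivity)]
  linarith

/-- Sobolev lower bound: for `p ≥ 1`, `s > 0`, `σ ∈ (0,1)` there is `c > 0`
such that every smooth compactly supported `f : ℝᵖ → ℝ` vanishing outside the
ball of radius `r ≤ 1` and `≥ 1` on the ball of radius `σr` satisfies
`‖f‖_{H^s} ≥ c r^{-s} r^{p/2}`, where the `H^s` norm is defined via the Fourier
transform. -/
theorem stmt18 (p : ℕ) (hp : 1 ≤ p) (s σ : ℝ) (hs : 0 < s)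
    (hσ0 : 0 < σ) (hσ1 : σ < 1) :
    ∃ c > (0 : ℝ), ∀ r : ℝ, 0 < r → r ≤ 1 →
      ∀ f : EuclideanSpace ℝ (Fin p) → ℝ,
        ContDiff ℝ (⊤ : ℕ∞) f → HasCompactSupport f →
        (∀ x, r ≤ ‖x‖ → f x = 0) →
        (∀ x, ‖x‖ ≤ σ * r → 1 ≤ f x) →
        c * r ^ (-s) * r ^ ((p : ℝ) / 2) ≤
          Real.sqrt (∫ ξ : EuclideanSpace ℝ (Fin p),
            (1 + ‖ξ‖ ^ 2) ^ s *
              ‖VectorFourier.fourierIntegral Real.fourierChar volume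
                (innerₗ (EuclideanSpace ℝ (Fin p))) (fun x => (f x : ℂ)) ξ‖ ^ 2) := by
  have : Nonempty (Fin p) := ⟨⟨0, hp⟩⟩
  obtain ⟨c, hc, hbound⟩ := exists_pos_mul_rpow_le_sobolevNorm
    (V := EuclideanSpace ℝ (Fin p)) (E := ℂ) hs.le hσ0 hσ1.le
  refine ⟨c, hc, fun r hr _ f hf hfc hvan hlow ↦ ?_⟩
  have := hbound r hr (fun x ↦ (f x : ℂ)) (Complex.ofRealCLM.contDiff.comp hf)
    (hfc.comp_left Complex.ofReal_zero) (fun x hx ↦ by simp [hvan x hx])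
    fun x hx ↦ (hlow x hx).trans ((le_abs_self _).trans_eq (Complex.norm_real _).symm)
  rwa [finrank_euclideanSpace_fin] at this
end

section
/- Let γ(x,t) = exp(∑_{0<|α|≤m} t^α X_α/α!)(x) + R(x,t) with R(x,t) = O(|t|^{m+1}), where the X_α are smooth vector fields near x₀ and exp denotes the time-one flow. Then there is a constant C such that d(y, γ(y,t)) ≤ C|t| and d(y, γ^{−1}(y,t)) ≤ C|t| uniformly for y near x₀ and t near 0, where d(x,y) = ∑_{I basic} |u_I|^{1/|I|} for y = exp(∑_{I basic} u_I X_I)(x) is the anisotropic quasi-distance built from a basis {X_I} of iterated commutators with weights |I| ≤ m. -/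
open Finset

/-!
Put `u_I(t) = ∑_{gmap α = I} t^α/α!`. Then `∑ u_I(t) Z_I = ∑ t^α X_α/α!`, so by uniqueness of ODE
solutions `φ t 1 = ψ (u t) 1`, and `|u_I(t)| ≤ C |t|^{wt I}`. Near `x₀` the time-one map
`w ↦ ψ w 1 y` is injective with a Lipschitz inverse, uniformly in `y`: comparing the trajectories
for `w` and `v`, `ψ w 1 y - ψ v 1 y` is `∑ (w - v)_I Z_I(x₀)` up to an error small compared with
`‖w - v‖`, and the `Z_I(x₀)` are linearly independent. Hence
`‖Θ y (γ y t) - u t‖ ≤ C ‖γ y t - ψ (u t) 1 y‖ = O(|t|^{m+1})`, so `|Θ_I| = O(|t|^{wt I})` because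
`wt I ≤ m`, and the `wt I`-th roots are `O(|t|)`. For `γ⁻¹` replace `u` by `-u`.
-/

open Metric Set Filter Topology
open scoped NNReal

section Calculus

variable {E : Type*} [NormedAddCommGroup E] [NormedSpace ℝ E]

theorem norm_sub_le_mul_of_norm_deriv_le_near {f f' : ℝ → E} {C r : ℝ} (hC : 0 ≤ C)
    (hCr : C < r) (hf : ∀ s ∈ Icc (0 : ℝ) 1, HasDerivAt f (f' s) s)
    (hbound : ∀ s ∈ Icc (0 : ℝ) 1, ‖f s - f 0‖ ≤ r → ‖f' s‖ ≤ C) :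
    ∀ s ∈ Icc (0 : ℝ) 1, ‖f s - f 0‖ ≤ C * s := by
  have hfc : ContinuousOn f (Icc 0 1) := HasDerivAt.continuousOn hf
  suffices Icc (0 : ℝ) 1 ⊆ {s | ‖f s - f 0‖ ≤ C * s} from fun s hs => this hs
  refine IsClosed.Icc_subset_of_forall_mem_nhdsWithin ?_ (by simp) ?_
  · rw [Set.inter_comm]
    exact isClosed_Icc.isClosed_le (f := fun s => ‖f s - f 0‖) (by fun_prop) (by fun_prop)
  rintro x ⟨hx, hx0, hx1⟩
  have hnear : {τ | τ < 1 ∧ ‖f τ - f 0‖ < r} ∈ 𝓝 x :=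
    Filter.inter_mem (Iio_mem_nhds hx1) <| ((hf x ⟨hx0, hx1.le⟩).continuousAt.sub
      continuousAt_const).norm.eventually_lt continuousAt_const
        (by simp only [Pi.sub_apply]; nlinarith [hx.out])
  obtain ⟨u, hxu, hu⟩ := exists_Ico_subset_of_mem_nhds hnear ⟨x + 1, by linarith⟩
  filter_upwards [Ioo_mem_nhdsGT hxu] with τ hτ
  have hseg : Icc x τ ⊆ Icc 0 1 := Icc_subset_Icc hx0 (hu ⟨hτ.1.le, hτ.2⟩).1.le
  have hmvt := norm_image_sub_le_of_norm_deriv_le_segment'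
    (fun s hs => (hf s (hseg hs)).hasDerivWithinAt)
    (fun s hs => hbound s (hseg (Ico_subset_Icc_self hs))
      (hu ⟨hs.1, hs.2.trans hτ.2⟩).2.le) τ ⟨hτ.1.le, le_rfl⟩
  calc ‖f τ - f 0‖ ≤ ‖f τ - f x‖ + ‖f x - f 0‖ := norm_sub_le_norm_sub_add_norm_sub _ _ _
    _ ≤ C * (τ - x) + C * x := add_le_add hmvt hx.out
    _ = C * τ := by ring

theorem ODE_solution_unique_of_contDiff {v : E → E} (hv : ContDiff ℝ 1 v) {f g : ℝ → E}
    {a b : ℝ} (hf : ∀ s ∈ Icc a b, HasDerivAt f (v (f s)) s)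
    (hg : ∀ s ∈ Icc a b, HasDerivAt g (v (g s)) s) (ha : f a = g a) :
    EqOn f g (Icc a b) := by
  have hfc : ContinuousOn f (Icc a b) := HasDerivAt.continuousOn hf
  have hgc : ContinuousOn g (Icc a b) := HasDerivAt.continuousOn hg
  obtain ⟨K, hK⟩ := hv.locallyLipschitz.locallyLipschitzOn.exists_lipschitzOnWith_of_compact
    ((isCompact_Icc.image_of_continuousOn hfc).union (isCompact_Icc.image_of_continuousOn hgc))
  exact ODE_solution_unique_of_mem_Icc_right (v := fun _ => v) (fun _ _ => hK) hfc
    (fun s hs => (hf s (Ico_subset_Icc_self hs)).hasDerivWithinAt)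
    (fun s hs => Or.inl (mem_image_of_mem f (Ico_subset_Icc_self hs))) hgc
    (fun s hs => (hg s (Ico_subset_Icc_self hs)).hasDerivWithinAt)
    (fun s hs => Or.inr (mem_image_of_mem g (Ico_subset_Icc_self hs))) ha

theorem ContDiffAt.exists_closedBall_lipschitzOnWith_norm_le {F : Type*} [NormedAddCommGroup F]
    [NormedSpace ℝ F] {h : E → F} {x₀ : E} (hh : ContDiffAt ℝ 1 h x₀) :
    ∃ R > 0, ∃ L : ℝ≥0, ∃ M ≥ 0,
      LipschitzOnWith L h (closedBall x₀ R) ∧ ∀ x ∈ closedBall x₀ R, ‖h x‖ ≤ M := by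
  obtain ⟨L, T, hT, hL⟩ := hh.exists_lipschitzOnWith
  obtain ⟨R, hR, hRT⟩ := nhds_basis_closedBall.mem_iff.1 hT
  replace hL := hL.mono hRT
  refine ⟨R, hR, L, ‖h x₀‖ + L * R, by positivity, hL, fun x hx => ?_⟩
  calc ‖h x‖ ≤ ‖h x₀‖ + ‖h x - h x₀‖ := norm_le_norm_add_norm_sub' _ _
    _ ≤ ‖h x₀‖ + L * ‖x - x₀‖ := by
        gcongr; exact hL.norm_sub_le hx (mem_closedBall_self hR.le)
    _ ≤ ‖h x₀‖ + L * R := by gcongr; exact mem_closedBall_iff_norm.1 hx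

end Calculus

section FrameODE

variable {E P : Type*} [NormedAddCommGroup E] [NormedSpace ℝ E] [NormedAddCommGroup P]
  [NormedSpace ℝ P] {A : E → P →L[ℝ] E} {f g : ℝ → E} {w v : P}

theorem mem_closedBall_of_hasDerivAt_clm_apply {x₀ : E} {R ρ M : ℝ}
    (hM : ∀ x ∈ closedBall x₀ R, ‖A x‖ ≤ M) (hM0 : 0 ≤ M) (hρ : 0 ≤ ρ) (hρR : ρ * (1 + M) < R)
    (hf : ∀ s ∈ Icc (0 : ℝ) 1, HasDerivAt f (A (f s) w) s) (hf0 : f 0 ∈ closedBall x₀ ρ)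
    (hw : ‖w‖ ≤ ρ) : ∀ s ∈ Icc (0 : ℝ) 1, f s ∈ closedBall x₀ (ρ * (1 + M)) := by
  rw [mem_closedBall_iff_norm] at hf0
  have hmove := norm_sub_le_mul_of_norm_deriv_le_near (by positivity)
    (by linarith : ρ * M < R - ρ) hf fun s _ hs => by
      have hfs : f s ∈ closedBall x₀ R := by
        rw [mem_closedBall_iff_norm]
        linarith [norm_sub_le_norm_sub_add_norm_sub (f s) (f 0) x₀]
      calc ‖A (f s) w‖ ≤ ‖A (f s)‖ * ‖w‖ := (A (f s)).le_opNorm w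
        _ ≤ M * ρ := mul_le_mul (hM _ hfs) hw (norm_nonneg _) hM0
        _ = ρ * M := mul_comm _ _
  intro s hs
  rw [mem_closedBall_iff_norm]
  have := hmove s hs
  nlinarith [norm_sub_le_norm_sub_add_norm_sub (f s) (f 0) x₀, hs.2, mul_nonneg hρ hM0]

variable {S : Set E} {M : ℝ} {L : ℝ≥0}

theorem clm_apply_sub_clm_apply (T T' : P →L[ℝ] E) (w v : P) :
    T w - T' v = T (w - v) + (T - T') v := by
  simp only [map_sub, sub_apply]; abel

theorem norm_sub_le_of_hasDerivAt_clm_apply (hL : LipschitzOnWith L A S)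
    (hM : ∀ x ∈ S, ‖A x‖ ≤ M) (hf : ∀ s ∈ Icc (0 : ℝ) 1, HasDerivAt f (A (f s) w) s)
    (hg : ∀ s ∈ Icc (0 : ℝ) 1, HasDerivAt g (A (g s) v) s) (hfS : ∀ s ∈ Icc (0 : ℝ) 1, f s ∈ S)
    (hgS : ∀ s ∈ Icc (0 : ℝ) 1, g s ∈ S) (h0 : f 0 = g 0) (hv : L * ‖v‖ ≤ 1 / 2) :
    ∀ s ∈ Icc (0 : ℝ) 1, ‖f s - g s‖ ≤ 2 * M * ‖w - v‖ := by
  have hM0 : 0 ≤ M := (norm_nonneg _).trans (hM _ (hfS 0 (left_mem_Icc.2 zero_le_one)))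
  have hD : ∀ s ∈ Icc (0 : ℝ) 1, HasDerivAt (f - g) (A (f s) w - A (g s) v) s :=
    fun s hs => (hf s hs).sub (hg s hs)
  obtain ⟨s₀, hs₀, hmax⟩ := isCompact_Icc.exists_isMaxOn (nonempty_Icc.2 zero_le_one)
    (HasDerivAt.continuousOn hD).norm
  set δ := ‖f s₀ - g s₀‖
  -- Bootstrap on the maximum `δ`: the mean value inequality gives `δ ≤ M ‖w - v‖ + δ / 2`.
  have hderiv : ∀ s ∈ Ico (0 : ℝ) 1, ‖A (f s) w - A (g s) v‖ ≤ M * ‖w - v‖ + L * ‖v‖ * δ := by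
    intro s hs
    have hs' := Ico_subset_Icc_self hs
    rw [clm_apply_sub_clm_apply]
    calc _ ≤ ‖A (f s)‖ * ‖w - v‖ + ‖A (f s) - A (g s)‖ * ‖v‖ :=
          norm_add_le_of_le (ContinuousLinearMap.le_opNorm _ _) (ContinuousLinearMap.le_opNorm _ _)
      _ ≤ M * ‖w - v‖ + (L * ‖f s - g s‖) * ‖v‖ := by
          gcongr
          · exact hM _ (hfS s hs')
          · exact hL.norm_sub_le (hfS s hs') (hgS s hs')
      _ = M * ‖w - v‖ + L * ‖v‖ * ‖f s - g s‖ := by ring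
      _ ≤ M * ‖w - v‖ + L * ‖v‖ * δ := by gcongr; exact isMaxOn_iff.1 hmax s hs'
  have hmvt := norm_image_sub_le_of_norm_deriv_le_segment'
    (fun s hs => (hD s hs).hasDerivWithinAt) hderiv s₀ hs₀
  simp only [Pi.sub_apply, h0, sub_self, sub_zero] at hmvt
  have hδ : δ ≤ M * ‖w - v‖ + L * ‖v‖ * δ :=
    hmvt.trans (mul_le_of_le_one_right (by positivity) hs₀.2)
  have hδ' : L * ‖v‖ * δ ≤ δ / 2 := by nlinarith [norm_nonneg (f s₀ - g s₀)]
  intro s hs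
  exact (isMaxOn_iff.1 hmax s hs).trans (show δ ≤ _ by linarith)

theorem norm_sub_sub_clm_apply_le_of_hasDerivAt {x₀ : E} {r : ℝ} (hL : LipschitzOnWith L A S)
    (hM : ∀ x ∈ S, ‖A x‖ ≤ M) (hx₀ : x₀ ∈ S)
    (hf : ∀ s ∈ Icc (0 : ℝ) 1, HasDerivAt f (A (f s) w) s)
    (hg : ∀ s ∈ Icc (0 : ℝ) 1, HasDerivAt g (A (g s) v) s) (hfS : ∀ s ∈ Icc (0 : ℝ) 1, f s ∈ S)
    (hgS : ∀ s ∈ Icc (0 : ℝ) 1, g s ∈ S) (h0 : f 0 = g 0)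
    (hr : ∀ s ∈ Icc (0 : ℝ) 1, ‖f s - x₀‖ ≤ r) (hv : L * ‖v‖ ≤ 1 / 2) :
    ‖f 1 - g 1 - A x₀ (w - v)‖ ≤ L * (r + 2 * M * ‖v‖) * ‖w - v‖ := by
  have hfg := norm_sub_le_of_hasDerivAt_clm_apply hL hM hf hg hfS hgS h0 hv
  have hD : ∀ s ∈ Icc (0 : ℝ) 1, HasDerivAt (fun s => f s - g s - s • A x₀ (w - v))
      (A (f s) w - A (g s) v - A x₀ (w - v)) s := fun s hs => by
    simpa only [id, one_smul] using
      ((hf s hs).fun_sub (hg s hs)).fun_sub ((hasDerivAt_id s).smul_const (A x₀ (w - v)))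
  have hderiv : ∀ s ∈ Ico (0 : ℝ) 1,
      ‖A (f s) w - A (g s) v - A x₀ (w - v)‖ ≤ L * (r + 2 * M * ‖v‖) * ‖w - v‖ := by
    intro s hs
    have hs' := Ico_subset_Icc_self hs
    rw [clm_apply_sub_clm_apply, add_sub_right_comm, ← sub_apply]
    calc _ ≤ ‖A (f s) - A x₀‖ * ‖w - v‖ + ‖A (f s) - A (g s)‖ * ‖v‖ :=
          norm_add_le_of_le (ContinuousLinearMap.le_opNorm _ _) (ContinuousLinearMap.le_opNorm _ _)
      _ ≤ (L * ‖f s - x₀‖) * ‖w - v‖ + (L * ‖f s - g s‖) * ‖v‖ := by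
          gcongr
          · exact hL.norm_sub_le (hfS s hs') hx₀
          · exact hL.norm_sub_le (hfS s hs') (hgS s hs')
      _ ≤ (L * r) * ‖w - v‖ + (L * (2 * M * ‖w - v‖)) * ‖v‖ := by
          gcongr
          · exact hr s hs'
          · exact hfg s hs'
      _ = L * (r + 2 * M * ‖v‖) * ‖w - v‖ := by ring
  simpa [h0] using norm_image_sub_le_of_norm_deriv_le_segment'
    (fun s hs => (hD s hs).hasDerivWithinAt) hderiv 1 (right_mem_Icc.2 zero_le_one)

theorem exists_norm_sub_le_flow_sub {x₀ : E} (hA : ContDiffAt ℝ 1 A x₀) {K : ℝ≥0}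
    (hK : AntilipschitzWith K (A x₀)) {ψ : P → ℝ → E → E} (hψ0 : ∀ c x, ψ c 0 x = x)
    (hψ : ∀ c x, ∀ s ∈ Icc (0 : ℝ) 1, HasDerivAt (fun s' => ψ c s' x) (A (ψ c s x) c) s) :
    ∃ ρ > 0, ∀ y ∈ closedBall x₀ ρ, ∀ w v : P, ‖w‖ ≤ ρ → ‖v‖ ≤ ρ →
      ‖w - v‖ ≤ 2 * K * ‖ψ w 1 y - ψ v 1 y‖ := by
  obtain ⟨R, hR, L, M, hM0, hL, hM⟩ := hA.exists_closedBall_lipschitzOnWith_norm_le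
  have small : ∀ (a : ℝ) {b : ℝ}, 0 < b → ∀ᶠ ρ in 𝓝 (0 : ℝ), ρ * a < b :=
    fun a b hb => ContinuousAt.eventually_lt (by fun_prop) continuousAt_const (by simpa using hb)
  have hpos : ∀ᶠ ρ in 𝓝[>] (0 : ℝ), 0 < ρ := self_mem_nhdsWithin
  -- `ρ` keeps both trajectories in the Lipschitz ball and makes the linearisation error
  -- at most `‖w - v‖ / (2 K)`.
  obtain ⟨ρ, ⟨hρR, hρL, hρK⟩, hρ⟩ := (((small (1 + M) hR).and ((small L one_half_pos).and
    (small (K * L * (1 + 3 * M)) one_half_pos))).filter_mono nhdsWithin_le_nhds |>.and hpos).exists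
  refine ⟨ρ, hρ, fun y hy w v hw hv => ?_⟩
  have hconf : ∀ c, ‖c‖ ≤ ρ → ∀ s ∈ Icc (0 : ℝ) 1, ψ c s y ∈ closedBall x₀ (ρ * (1 + M)) :=
    fun c hc => mem_closedBall_of_hasDerivAt_clm_apply hM hM0 hρ.le hρR (hψ c y)
      (by rwa [hψ0]) hc
  have hS : ∀ c, ‖c‖ ≤ ρ → ∀ s ∈ Icc (0 : ℝ) 1, ψ c s y ∈ closedBall x₀ R := fun c hc s hs =>
    closedBall_subset_closedBall hρR.le (hconf c hc s hs)
  have hlin := norm_sub_sub_clm_apply_le_of_hasDerivAt hL hM (mem_closedBall_self hR.le)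
    (hψ w y) (hψ v y) (hS w hw) (hS v hv) (by simp only [hψ0])
    (fun s hs => mem_closedBall_iff_norm.1 (hconf w hw s hs))
    (by nlinarith [norm_nonneg v, L.coe_nonneg])
  have herr : K * ‖ψ w 1 y - ψ v 1 y - A x₀ (w - v)‖ ≤ ‖w - v‖ / 2 :=
    calc _ ≤ K * (L * (ρ * (1 + M) + 2 * M * ρ) * ‖w - v‖) := by
          gcongr; exact hlin.trans (by gcongr)
      _ = ρ * (K * L * (1 + 3 * M)) * ‖w - v‖ := by ring
      _ ≤ 1 / 2 * ‖w - v‖ := by gcongr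
      _ = ‖w - v‖ / 2 := by ring
  have : ‖w - v‖ ≤ K * ‖ψ w 1 y - ψ v 1 y‖ + K * ‖ψ w 1 y - ψ v 1 y - A x₀ (w - v)‖ :=
    calc ‖w - v‖ ≤ K * ‖A x₀ (w - v)‖ := hK.le_mul_norm (map_zero _) _
      _ ≤ _ := by rw [← mul_add]; gcongr; exact norm_le_norm_add_norm_sub _ _
  linarith

end FrameODE

section Frame

variable {E ι : Type*} [NormedAddCommGroup E] [NormedSpace ℝ E] [Fintype ι]

noncomputable def frameCLM (Z : ι → E → E) (x : E) : (ι → ℝ) →L[ℝ] E :=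
  ∑ I, (ContinuousLinearMap.proj I).smulRight (Z I x)

@[simp]
theorem frameCLM_apply (Z : ι → E → E) (x : E) (c : ι → ℝ) :
    frameCLM Z x c = ∑ I, c I • Z I x := by
  simp [frameCLM]

theorem contDiff_frameCLM {Z : ι → E → E} {n : WithTop ℕ∞} (hZ : ∀ I, ContDiff ℝ n (Z I)) :
    ContDiff ℝ n (frameCLM Z) :=
  ContDiff.sum fun I _ =>
    (ContinuousLinearMap.smulRightL ℝ (ι → ℝ) E (ContinuousLinearMap.proj I)).contDiff.comp (hZ I)

theorem exists_antilipschitzWith_frameCLM {Z : ι → E → E} {x : E}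
    (hZ : LinearIndependent ℝ fun I => Z I x) : ∃ K, AntilipschitzWith K (frameCLM Z x) := by
  obtain ⟨K, -, hK⟩ := (frameCLM Z x : (ι → ℝ) →ₗ[ℝ] E).injective_iff_antilipschitz.1
    fun c c' h => funext (Fintype.linearIndependent_iffₛ.1 hZ c c' (by simpa using h))
  exact ⟨K, hK⟩

theorem eq_flow_of_hasDerivAt_frameCLM {Z : ι → E → E} (hZ : ∀ I, ContDiff ℝ 1 (Z I))
    {ψ : (ι → ℝ) → ℝ → E → E} (hψ0 : ∀ c x, ψ c 0 x = x)
    (hψ : ∀ c x, ∀ s ∈ Icc (0 : ℝ) 1, HasDerivAt (fun s' => ψ c s' x) (frameCLM Z (ψ c s x) c) s)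
    {c : ι → ℝ} {f : ℝ → E} (hf : ∀ s ∈ Icc (0 : ℝ) 1, HasDerivAt f (frameCLM Z (f s) c) s) :
    f 1 = ψ c 1 (f 0) :=
  ODE_solution_unique_of_contDiff ((contDiff_frameCLM hZ).clm_apply contDiff_const) hf
    (hψ c (f 0)) (hψ0 c (f 0)).symm ⟨zero_le_one, le_rfl⟩

end Frame

section Coefficients

variable {k : ℕ} {ι : Type*} [DecidableEq ι]

noncomputable def frameCoeff (gmap : (Fin k → ℕ) → ι) (m : ℕ) (t : Fin k → ℝ) (I : ι) : ℝ :=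
  ∑ α ∈ (mIdxs k m).filter (gmap · = I), tpow t α / mfact α

theorem frameCLM_frameCoeff [Fintype ι] {n m : ℕ} {Z : ι → (Fin n → ℝ) → Fin n → ℝ}
    {X : (Fin k → ℕ) → (Fin n → ℝ) → Fin n → ℝ} {gmap : (Fin k → ℕ) → ι}
    (hZX : ∀ α ∈ mIdxs k m, Z (gmap α) = X α) (t : Fin k → ℝ) (x : Fin n → ℝ) :
    frameCLM Z x (frameCoeff gmap m t) = vSum m X t x := by
  rw [frameCLM_apply, vSum, ← Finset.sum_fiberwise (mIdxs k m) gmap]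
  refine Finset.sum_congr rfl fun I _ => ?_
  rw [frameCoeff, Finset.sum_smul]
  refine Finset.sum_congr rfl fun α hα => ?_
  obtain ⟨hαm, rfl⟩ := Finset.mem_filter.1 hα
  rw [hZX α hαm]

theorem abs_tpow_le (t : Fin k → ℝ) (α : Fin k → ℕ) : |tpow t α| ≤ ‖t‖ ^ mdeg α := by
  rw [tpow, Finset.abs_prod, mdeg, ← Finset.prod_pow_eq_pow_sum]
  gcongr with i
  rw [abs_pow, ← Real.norm_eq_abs]
  gcongr
  exact norm_le_pi_norm t i

theorem one_le_mfact (α : Fin k → ℕ) : 1 ≤ mfact α :=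
  Finset.prod_pos fun i _ => Nat.factorial_pos (α i)

theorem abs_frameCoeff_le {m : ℕ} {wt : ι → ℕ} {gmap : (Fin k → ℕ) → ι}
    (hwt : ∀ α ∈ mIdxs k m, wt (gmap α) = mdeg α) (t : Fin k → ℝ) (I : ι) :
    |frameCoeff gmap m t I| ≤ #(mIdxs k m) * ‖t‖ ^ wt I :=
  calc |frameCoeff gmap m t I|
      ≤ ∑ α ∈ (mIdxs k m).filter (gmap · = I), |tpow t α / mfact α| :=
        Finset.abs_sum_le_sum_abs _ _
    _ ≤ ∑ α ∈ (mIdxs k m).filter (gmap · = I), ‖t‖ ^ wt I := by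
        refine Finset.sum_le_sum fun α hα => ?_
        obtain ⟨hαm, rfl⟩ := Finset.mem_filter.1 hα
        rw [abs_div, Nat.abs_cast, hwt α hαm]
        exact div_le_of_le_mul₀ (Nat.cast_nonneg _) (by positivity)
          ((abs_tpow_le t α).trans (le_mul_of_one_le_right (by positivity)
            (by exact_mod_cast one_le_mfact α)))
    _ ≤ #(mIdxs k m) * ‖t‖ ^ wt I := by
        rw [Finset.sum_const, nsmul_eq_mul]
        gcongr
        exact Finset.filter_subset _ _

end Coefficients

theorem sum_abs_rpow_inv_le {ι : Type*} [Fintype ι] {m : ℕ} {wt : ι → ℕ}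
    (hwt : ∀ I, 1 ≤ wt I ∧ wt I ≤ m) {a b : ι → ℝ} {r N D : ℝ} (hr0 : 0 ≤ r) (hr1 : r ≤ 1)
    (hD : 0 ≤ D) (hb : ∀ I, |b I| ≤ N * r ^ wt I) (hab : ‖a - b‖ ≤ D * r ^ (m + 1)) :
    ∑ I, |a I| ^ (wt I : ℝ)⁻¹ ≤ Fintype.card ι * (max 1 (N + D) * r) := by
  set B := max 1 (N + D)
  have hterm : ∀ I, |a I| ^ (wt I : ℝ)⁻¹ ≤ B * r := fun I => by
    obtain ⟨hw1, hwm⟩ := hwt I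
    have hw : 0 < (wt I : ℝ) := by exact_mod_cast hw1
    rw [Real.rpow_inv_le_iff_of_pos (abs_nonneg _) (by positivity) hw, Real.rpow_natCast]
    have hab_I : |a I - b I| ≤ D * r ^ wt I :=
      calc |a I - b I| ≤ ‖a - b‖ := norm_le_pi_norm (a - b) I
        _ ≤ D * r ^ (m + 1) := hab
        _ ≤ D * r ^ wt I := mul_le_mul_of_nonneg_left (pow_le_pow_of_le_one hr0 hr1 (by omega)) hD
    calc |a I| ≤ |b I| + |a I - b I| := by linarith [abs_sub_abs_le_abs_sub (a I) (b I)]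
      _ ≤ (N + D) * r ^ wt I := by linarith [hb I]
      _ ≤ B ^ wt I * r ^ wt I := by
          gcongr
          exact (le_max_right _ _).trans (le_self_pow₀ (le_max_left _ _) (by omega))
      _ = (B * r) ^ wt I := (mul_pow _ _ _).symm
  calc ∑ I, |a I| ^ (wt I : ℝ)⁻¹ ≤ ∑ _I : ι, B * r := Finset.sum_le_sum fun I _ => hterm I
    _ = Fintype.card ι * (B * r) := by simp

theorem exists_eventually_sum_abs_rpow_inv_le {E F ι : Type*} [NormedAddCommGroup E]
    [NormedAddCommGroup F] [Fintype ι] {U : Set E} (hU : IsOpen U) {x₀ : E} (hx₀ : x₀ ∈ U)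
    {m : ℕ} {wt : ι → ℕ} (hwt : ∀ I, 1 ≤ wt I ∧ wt I ≤ m) {ψ : (ι → ℝ) → ℝ → E → E}
    {Θ : E → E → ι → ℝ} (hΘc : Continuous fun q : E × E => Θ q.1 q.2) (hΘ0 : ∀ x, Θ x x = 0)
    (hΘ : ∀ x ∈ U, ∀ y ∈ U, ψ (Θ x y) 1 x = y) {ρ K : ℝ} (hρ : 0 < ρ) (hK : 0 ≤ K)
    (hinj : ∀ y ∈ closedBall x₀ ρ, ∀ w v : ι → ℝ, ‖w‖ ≤ ρ → ‖v‖ ≤ ρ →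
      ‖w - v‖ ≤ K * ‖ψ w 1 y - ψ v 1 y‖)
    {g : E → F → E} (hg : Continuous fun q : E × F => g q.1 q.2) (hg0 : ∀ x, g x 0 = x)
    {c : F → ι → ℝ} {N : ℝ} (hN : 0 ≤ N) (hc : ∀ t I, |c t I| ≤ N * ‖t‖ ^ wt I)
    {C ε : ℝ} (hC : 0 ≤ C) (hε : 0 < ε)
    (happrox : ∀ y ∈ U, ∀ t, ‖t‖ ≤ ε → ‖g y t - ψ (c t) 1 y‖ ≤ C * ‖t‖ ^ (m + 1)) :
    ∃ B, ∀ᶠ p : E × F in 𝓝 (x₀, 0), ∑ I, |Θ p.1 (g p.1 p.2) I| ^ (wt I : ℝ)⁻¹ ≤ B * ‖p.2‖ := by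
  have ht : ∀ᶠ p : E × F in 𝓝 (x₀, 0), ‖p.2‖ < min ε 1 ∧ N * ‖p.2‖ < ρ :=
    (ContinuousAt.eventually_lt (by fun_prop) continuousAt_const (by simp [hε])).and
      (ContinuousAt.eventually_lt (by fun_prop) continuousAt_const (by simpa using hρ))
  have hy : ∀ᶠ p : E × F in 𝓝 (x₀, 0), p.1 ∈ U ∩ closedBall x₀ ρ :=
    continuousAt_fst.preimage_mem_nhds (inter_mem (hU.mem_nhds hx₀) (closedBall_mem_nhds x₀ hρ))
  have hgU : ∀ᶠ p : E × F in 𝓝 (x₀, 0), g p.1 p.2 ∈ U :=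
    hg.continuousAt.preimage_mem_nhds (by simpa [hg0] using hU.mem_nhds hx₀)
  have hΘρ : ∀ᶠ p : E × F in 𝓝 (x₀, 0), ‖Θ p.1 (g p.1 p.2)‖ < ρ :=
    ContinuousAt.eventually_lt (hΘc.comp (continuous_fst.prodMk hg)).norm.continuousAt
      continuousAt_const (by simpa [hg0, hΘ0] using hρ)
  refine ⟨Fintype.card ι * max 1 (N + K * C), ?_⟩
  filter_upwards [ht, hy, hgU, hΘρ] with ⟨y, t⟩ ⟨htε, htN⟩ ⟨hyU, hyρ⟩ hgU hΘρ
  have ht1 : ‖t‖ ≤ 1 := htε.le.trans (min_le_right _ _)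
  have hcρ : ‖c t‖ ≤ ρ := (pi_norm_le_iff_of_nonneg hρ.le).2 fun I =>
    calc ‖c t I‖ ≤ N * ‖t‖ ^ wt I := hc t I
      _ ≤ N * ‖t‖ := by gcongr; exact pow_le_of_le_one (norm_nonneg t) ht1 (by have := hwt I; omega)
      _ ≤ ρ := htN.le
  have hclose : ‖Θ y (g y t) - c t‖ ≤ K * C * ‖t‖ ^ (m + 1) :=
    calc ‖Θ y (g y t) - c t‖ ≤ K * ‖ψ (Θ y (g y t)) 1 y - ψ (c t) 1 y‖ :=
          hinj y hyρ _ _ hΘρ.le hcρ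
      _ = K * ‖g y t - ψ (c t) 1 y‖ := by rw [hΘ y hyU _ hgU]
      _ ≤ K * (C * ‖t‖ ^ (m + 1)) := by
          gcongr; exact happrox y hyU t (htε.le.trans (min_le_left _ _))
      _ = K * C * ‖t‖ ^ (m + 1) := by ring
  simpa only [mul_assoc] using
    sum_abs_rpow_inv_le hwt (norm_nonneg t) ht1 (mul_nonneg hK hC) (hc t) hclose

/-- `φ`, `φ'` are the time-one flows of `±∑ t^α X_α/α!`; the frame `Z` of iterated commutators
with weights `wt` contains `X_α` as `Z (gmap α)`; `ψ u 1` is the time-one flow of `∑ u_I Z_I`, and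
`Θ x y` are the canonical coordinates of `y` relative to `x`. -/
theorem stmt19_general (n k m : ℕ) (x₀ : Fin n → ℝ)
    (U : Set (Fin n → ℝ)) (hU : IsOpen U) (hx₀ : x₀ ∈ U)
    (ι : Type*) [Fintype ι] (wt : ι → ℕ)
    (hwt : ∀ I, 1 ≤ wt I ∧ wt I ≤ m)
    (Z : ι → (Fin n → ℝ) → (Fin n → ℝ)) (hZs : ∀ I, ContDiff ℝ (⊤ : ℕ∞) (Z I))
    (X : (Fin k → ℕ) → (Fin n → ℝ) → (Fin n → ℝ))
    (gmap : (Fin k → ℕ) → ι)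
    (hgmap : ∀ α ∈ mIdxs k m, wt (gmap α) = mdeg α ∧ Z (gmap α) = X α)
    (hbasis : LinearIndependent ℝ (fun I => Z I x₀) ∧
      Submodule.span ℝ (Set.range fun I => Z I x₀) = ⊤)
    (ψ : (ι → ℝ) → ℝ → (Fin n → ℝ) → (Fin n → ℝ))
    (hψ0 : ∀ u x, ψ u 0 x = x)
    (hψ' : ∀ u x, ∀ s ∈ Set.Icc (0 : ℝ) 1,
      HasDerivAt (fun s' => ψ u s' x) (∑ I : ι, u I • Z I (ψ u s x)) s)
    (Θ : (Fin n → ℝ) → (Fin n → ℝ) → (ι → ℝ))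
    (hΘs : ContDiff ℝ (⊤ : ℕ∞) fun q : (Fin n → ℝ) × (Fin n → ℝ) => Θ q.1 q.2)
    (hΘ0 : ∀ x, Θ x x = 0)
    (hΘ : ∀ x ∈ U, ∀ y ∈ U, ψ (Θ x y) 1 x = y)
    (φ φ' : (Fin k → ℝ) → ℝ → (Fin n → ℝ) → (Fin n → ℝ))
    (hφ0 : ∀ t x, φ t 0 x = x) (hφ'0 : ∀ t x, φ' t 0 x = x)
    (hφode : ∀ t x, ∀ s ∈ Set.Icc (0 : ℝ) 1,
      HasDerivAt (fun s' => φ t s' x) (vSum m X t (φ t s x)) s)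
    (hφ'ode : ∀ t x, ∀ s ∈ Set.Icc (0 : ℝ) 1,
      HasDerivAt (fun s' => φ' t s' x) (-(vSum m X t (φ' t s x))) s)
    (γ γinv : (Fin n → ℝ) → (Fin k → ℝ) → (Fin n → ℝ))
    (hγs : ContDiff ℝ (⊤ : ℕ∞) fun q : (Fin n → ℝ) × (Fin k → ℝ) => γ q.1 q.2)
    (hγinvs : ContDiff ℝ (⊤ : ℕ∞) fun q : (Fin n → ℝ) × (Fin k → ℝ) => γinv q.1 q.2)
    (hγ0 : ∀ x, γ x 0 = x) (hγinv0 : ∀ x, γinv x 0 = x)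
    (hrep : ∃ C > (0 : ℝ), ∃ ε > (0 : ℝ), ∀ y ∈ U, ∀ t : Fin k → ℝ, ‖t‖ ≤ ε →
      ‖γ y t - φ t 1 y‖ ≤ C * ‖t‖ ^ (m + 1))
    (hrep' : ∃ C > (0 : ℝ), ∃ ε > (0 : ℝ), ∀ y ∈ U, ∀ t : Fin k → ℝ, ‖t‖ ≤ ε →
      ‖γinv y t - φ' t 1 y‖ ≤ C * ‖t‖ ^ (m + 1)) :
    ∃ C > (0 : ℝ), ∃ δ > (0 : ℝ), ∃ ε > (0 : ℝ), ∀ y : Fin n → ℝ, ‖y - x₀‖ < δ →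
      ∀ t : Fin k → ℝ, ‖t‖ < ε →
        (∑ I : ι, |Θ y (γ y t) I| ^ ((wt I : ℝ)⁻¹)) ≤ C * ‖t‖ ∧
        (∑ I : ι, |Θ y (γinv y t) I| ^ ((wt I : ℝ)⁻¹)) ≤ C * ‖t‖ := by
  classical
  have hZ : ∀ I, ContDiff ℝ 1 (Z I) := fun I => (hZs I).of_le (by exact_mod_cast le_top)
  have hψA : ∀ c x, ∀ s ∈ Icc (0 : ℝ) 1,
      HasDerivAt (fun s' => ψ c s' x) (frameCLM Z (ψ c s x) c) s := by
    simpa only [frameCLM_apply] using hψ'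
  obtain ⟨K, hK⟩ := exists_antilipschitzWith_frameCLM hbasis.1
  obtain ⟨ρ, hρ, hinj⟩ := exists_norm_sub_le_flow_sub (contDiff_frameCLM hZ).contDiffAt hK hψ0 hψA
  have hvSum := frameCLM_frameCoeff (fun α hα => (hgmap α hα).2)
  have hφψ : ∀ t y, φ t 1 y = ψ (frameCoeff gmap m t) 1 y := fun t y => by
    simpa only [hφ0] using eq_flow_of_hasDerivAt_frameCLM (f := (φ t · y)) hZ hψ0 hψA
      fun s hs => by simpa only [hvSum] using hφode t y s hs
  have hφ'ψ : ∀ t y, φ' t 1 y = ψ (-frameCoeff gmap m t) 1 y := fun t y => by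
    simpa only [hφ'0] using eq_flow_of_hasDerivAt_frameCLM (f := (φ' t · y)) hZ hψ0 hψA
      fun s hs => by simpa only [map_neg, hvSum] using hφ'ode t y s hs
  have hu := abs_frameCoeff_le (fun α hα => (hgmap α hα).1)
  obtain ⟨C, hC, ε, hε, happrox⟩ := hrep
  obtain ⟨C', hC', ε', hε', happrox'⟩ := hrep'
  obtain ⟨B, hB⟩ := exists_eventually_sum_abs_rpow_inv_le hU hx₀ hwt hΘs.continuous hΘ0 hΘ hρ
    (by positivity) hinj hγs.continuous hγ0 (Nat.cast_nonneg _) hu hC.le hε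
    fun y hy t ht => hφψ t y ▸ happrox y hy t ht
  obtain ⟨B', hB'⟩ := exists_eventually_sum_abs_rpow_inv_le hU hx₀ hwt hΘs.continuous hΘ0 hΘ hρ
    (by positivity) hinj hγinvs.continuous hγinv0 (Nat.cast_nonneg _)
    (fun t I => by simpa only [Pi.neg_apply, abs_neg] using hu t I) hC'.le hε'
    fun y hy t ht => hφ'ψ t y ▸ happrox' y hy t ht
  obtain ⟨r, hr, hball⟩ := Metric.eventually_nhds_iff.1 (hB.and hB')
  refine ⟨max (max B B') 1, by positivity, r, hr, r, hr, fun y hy t ht => ?_⟩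
  obtain ⟨h, h'⟩ := hball (show dist (y, t) (x₀, 0) < r by
    rw [Prod.dist_eq, dist_eq_norm, dist_zero_right]; exact max_lt hy ht)
  exact ⟨h.trans (by gcongr; exact le_max_of_le_left (le_max_left _ _)),
    h'.trans (by gcongr; exact le_max_of_le_left (le_max_right _ _))⟩

/-- Let `γ(x,t) = exp(∑_{0<|α|≤m} t^α X_α/α!)(x) + O(|t|^{m+1})` (witnessed by
the time-one flow `φ` of `∑ t^α X_α/α!`, and similarly `φ'` with the negated
field for `γ⁻¹`).  Let `{Z_I}_{I ∈ ι}` be a frame of smooth vector fields with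
weights `1 ≤ wt I ≤ m` whose values at `x₀` form a basis, containing the
fields `X_α` (via `gmap`, with `wt (gmap α) = |α|`), let `ψ` be the time-one
flow of `∑_I u_I Z_I`, and let `Θ x y` be the smooth canonical coordinates,
`ψ (Θ x y) 1 x = y`, `Θ x x = 0`.  Then the quasi-distance
`d(x,y) = ∑_I |Θ x y I|^{1/wt I}` satisfies `d(y, γ(y,t)) ≤ C|t|` and
`d(y, γ⁻¹(y,t)) ≤ C|t|`, uniformly for `y` near `x₀` and `t` near `0`. -/
theorem stmt19 (n k m : ℕ) (hm : 1 ≤ m) (x₀ : Fin n → ℝ)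
    (U : Set (Fin n → ℝ)) (hU : IsOpen U) (hx₀ : x₀ ∈ U)
    (ι : Type*) [Fintype ι] (wt : ι → ℕ)
    (hwt : ∀ I, 1 ≤ wt I ∧ wt I ≤ m)
    (Z : ι → (Fin n → ℝ) → (Fin n → ℝ)) (hZs : ∀ I, ContDiff ℝ (⊤ : ℕ∞) (Z I))
    (X : (Fin k → ℕ) → (Fin n → ℝ) → (Fin n → ℝ))
    (hXs : ∀ α, ContDiff ℝ (⊤ : ℕ∞) (X α))
    (gmap : (Fin k → ℕ) → ι)
    (hgmap : ∀ α ∈ mIdxs k m, wt (gmap α) = mdeg α ∧ Z (gmap α) = X α)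
    (hbasis : LinearIndependent ℝ (fun I => Z I x₀) ∧
      Submodule.span ℝ (Set.range fun I => Z I x₀) = ⊤)
    (ψ : (ι → ℝ) → ℝ → (Fin n → ℝ) → (Fin n → ℝ))
    (hψ0 : ∀ u x, ψ u 0 x = x)
    (hψ' : ∀ u x, ∀ s ∈ Set.Icc (0 : ℝ) 1,
      HasDerivAt (fun s' => ψ u s' x) (∑ I : ι, u I • Z I (ψ u s x)) s)
    (Θ : (Fin n → ℝ) → (Fin n → ℝ) → (ι → ℝ))
    (hΘs : ContDiff ℝ (⊤ : ℕ∞) fun q : (Fin n → ℝ) × (Fin n → ℝ) => Θ q.1 q.2)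
    (hΘ0 : ∀ x, Θ x x = 0)
    (hΘ : ∀ x ∈ U, ∀ y ∈ U, ψ (Θ x y) 1 x = y)
    (φ φ' : (Fin k → ℝ) → ℝ → (Fin n → ℝ) → (Fin n → ℝ))
    (hφ0 : ∀ t x, φ t 0 x = x) (hφ'0 : ∀ t x, φ' t 0 x = x)
    (hφode : ∀ t x, ∀ s ∈ Set.Icc (0 : ℝ) 1,
      HasDerivAt (fun s' => φ t s' x) (vSum m X t (φ t s x)) s)
    (hφ'ode : ∀ t x, ∀ s ∈ Set.Icc (0 : ℝ) 1,
      HasDerivAt (fun s' => φ' t s' x) (-(vSum m X t (φ' t s x))) s)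
    (γ γinv : (Fin n → ℝ) → (Fin k → ℝ) → (Fin n → ℝ))
    (hγs : ContDiff ℝ (⊤ : ℕ∞) fun q : (Fin n → ℝ) × (Fin k → ℝ) => γ q.1 q.2)
    (hγinvs : ContDiff ℝ (⊤ : ℕ∞) fun q : (Fin n → ℝ) × (Fin k → ℝ) => γinv q.1 q.2)
    (hγ0 : ∀ x, γ x 0 = x) (hγinv0 : ∀ x, γinv x 0 = x)
    (hinv : ∀ x t, γ (γinv x t) t = x)
    (hrep : ∃ C > (0 : ℝ), ∃ ε > (0 : ℝ), ∀ y ∈ U, ∀ t : Fin k → ℝ, ‖t‖ ≤ ε →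
      ‖γ y t - φ t 1 y‖ ≤ C * ‖t‖ ^ (m + 1))
    (hrep' : ∃ C > (0 : ℝ), ∃ ε > (0 : ℝ), ∀ y ∈ U, ∀ t : Fin k → ℝ, ‖t‖ ≤ ε →
      ‖γinv y t - φ' t 1 y‖ ≤ C * ‖t‖ ^ (m + 1)) :
    ∃ C > (0 : ℝ), ∃ δ > (0 : ℝ), ∃ ε > (0 : ℝ), ∀ y : Fin n → ℝ, ‖y - x₀‖ < δ →
      ∀ t : Fin k → ℝ, ‖t‖ < ε →
        (∑ I : ι, |Θ y (γ y t) I| ^ ((wt I : ℝ)⁻¹)) ≤ C * ‖t‖ ∧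
        (∑ I : ι, |Θ y (γinv y t) I| ^ ((wt I : ℝ)⁻¹)) ≤ C * ‖t‖ :=
  stmt19_general n k m x₀ U hU hx₀ ι wt hwt Z hZs X gmap hgmap hbasis ψ hψ0 hψ' Θ hΘs hΘ0 hΘ φ φ'
    hφ0 hφ'0 hφode hφ'ode γ γinv hγs hγinvs hγ0 hγinv0 hrep hrep'
end
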